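/- arXiv:math/0610324 — 11 statements merged into one kernel-verified Lean document; each statement's English description precedes it below -/
import Mathlib

section
/- Let H₁ ≤ H₂ be continuous functions on (0,∞), and let h₁, h₂ be continuous functions with H₁ ≤ hᵢ ≤ H₂ such that each hᵢ is concave on every interval on which hᵢ < H₂. Then h := min(h₁, h₂) is continuous, satisfies H₁ ≤ h ≤ H₂, and is concave on every interval on which h < H₂. -/
/-!
Fix an interval `[x, y]` inside `J` and let `L` be the chord of `h = min h₁ h₂` over it. If `h`
dipped below `L`, take the largest point `z` at which `h - L` attains its minimum. There `h z` equals
`h₁ z` or `h₂ z`, say `hᵢ z`, and `hᵢ z = h z < H₂ z`; by continuity `hᵢ < H₂` near `z`, so `hᵢ` is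
concave near `z` and lies above `h`. Comparing `hᵢ - L` at `z` with its values at `z ± ε`, which are
`≥` and, on the right, `>` the minimum, contradicts midpoint concavity.
-/

open Set Filter Topology

def HasLocalConcaveMajorantAt (g : ℝ → ℝ) (z : ℝ) : Prop :=
  ∃ f : ℝ → ℝ, f z = g z ∧ ∃ U ∈ 𝓝 z, ConcaveOn ℝ U f ∧ ∀ y ∈ U, g y ≤ f y

theorem ConcaveOn.add_le_two_mul {U : Set ℝ} {f : ℝ → ℝ} (hf : ConcaveOn ℝ U f) {x d : ℝ}
    (hl : x - d ∈ U) (hr : x + d ∈ U) : f (x - d) + f (x + d) ≤ 2 * f x := by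
  have h := hf.2 hl hr (by norm_num : (0 : ℝ) ≤ 1 / 2) (by norm_num : (0 : ℝ) ≤ 1 / 2)
    (by norm_num)
  have hmid : (1 / 2 : ℝ) • (x - d) + (1 / 2 : ℝ) • (x + d) = x := by
    simp only [smul_eq_mul]; ring
  rw [hmid, smul_eq_mul, smul_eq_mul] at h
  linarith

section LocalConcaveMajorant

variable {g : ℝ → ℝ}

theorem le_of_hasLocalConcaveMajorantAt {a b m c : ℝ} (hg : ContinuousOn g (Icc a b))
    (hmaj : ∀ z ∈ Ioo a b, HasLocalConcaveMajorantAt g z)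
    (ha : m * a + c ≤ g a) (hb : m * b + c ≤ g b) {z : ℝ} (hz : z ∈ Icc a b) :
    m * z + c ≤ g z := by
  set φ : ℝ → ℝ := fun y => g y - (m * y + c) with hφ_def
  have hφ : ContinuousOn φ (Icc a b) := hg.sub (by fun_prop)
  obtain ⟨z₀, hz₀, hmin⟩ := isCompact_Icc.exists_isMinOn ⟨z, hz⟩ hφ
  by_contra! hlt
  have hneg : φ z₀ < 0 := (hmin hz).trans_lt (by simp only [hφ_def]; linarith)
  set S := Icc a b ∩ φ ⁻¹' Iic (φ z₀)
  have hS : IsCompact S := isCompact_Icc.of_isClosed_subset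
    (hφ.preimage_isClosed_of_isClosed isClosed_Icc isClosed_Iic) inter_subset_left
  obtain ⟨z₁, ⟨hz₁, hφz₁ : φ z₁ ≤ φ z₀⟩, hgreatest⟩ :=
    hS.exists_isGreatest ⟨z₀, hz₀, le_refl (φ z₀)⟩
  have hright : ∀ y ∈ Icc a b, z₁ < y → φ z₀ < φ y := fun y hy hzy =>
    lt_of_not_ge fun hφy => (hgreatest ⟨hy, hφy⟩).not_gt hzy
  have hz₁_mem : z₁ ∈ Ioo a b := by
    refine ⟨hz₁.1.lt_of_ne ?_, hz₁.2.lt_of_ne ?_⟩ <;> rintro rfl <;>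
      simp only [hφ_def] at hφz₁ hneg <;> linarith
  obtain ⟨f, hfz, U, hU, hfU, hgf⟩ := hmaj z₁ hz₁_mem
  obtain ⟨ε, hε, hball⟩ := Metric.mem_nhds_iff.1 (inter_mem hU (Ioo_mem_nhds hz₁_mem.1 hz₁_mem.2))
  rw [Real.ball_eq_Ioo] at hball
  have hl : z₁ - ε / 2 ∈ U ∩ Ioo a b := hball ⟨by linarith, by linarith⟩
  have hr : z₁ + ε / 2 ∈ U ∩ Ioo a b := hball ⟨by linarith, by linarith⟩
  have hmid := hfU.add_le_two_mul hl.1 hr.1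
  have hφl : φ z₀ ≤ φ (z₁ - ε / 2) := hmin (Ioo_subset_Icc_self hl.2)
  have hφr : φ z₀ < φ (z₁ + ε / 2) := hright _ (Ioo_subset_Icc_self hr.2) (by linarith)
  have hgl := hgf _ hl.1
  have hgr := hgf _ hr.1
  simp only [hφ_def] at hφl hφr hφz₁
  linarith

theorem concaveOn_of_hasLocalConcaveMajorantAt {J : Set ℝ} (hJ : Convex ℝ J)
    (hg : ContinuousOn g J) (hmaj : ∀ z ∈ J, HasLocalConcaveMajorantAt g z) :
    ConcaveOn ℝ J g := by
  refine LinearOrder.concaveOn_of_lt hJ fun x hx y hy hxy s t hs ht hst => ?_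
  obtain rfl : s = 1 - t := eq_sub_of_add_eq hst
  have hxyJ : Icc x y ⊆ J := hJ.ordConnected.out hx hy
  set m := (g y - g x) / (y - x)
  have hslope : m * (y - x) = g y - g x := div_mul_cancel₀ _ (sub_ne_zero.2 hxy.ne')
  have hmem : (1 - t) * x + t * y ∈ Icc x y :=
    ⟨by nlinarith [mul_pos ht (sub_pos.2 hxy)], by nlinarith [mul_pos hs (sub_pos.2 hxy)]⟩
  have hle := le_of_hasLocalConcaveMajorantAt (hg.mono hxyJ) (m := m) (c := g x - m * x)
    (fun z hz => hmaj z (hxyJ (Ioo_subset_Icc_self hz))) (by linarith) (by linarith) hmem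
  simp only [smul_eq_mul]
  linear_combination hle - t * hslope

end LocalConcaveMajorant

theorem hasLocalConcaveMajorantAt_of_le {g f H : ℝ → ℝ} {z : ℝ} (hz : 0 < z)
    (hf : ContinuousOn f (Ioi 0)) (hH : ContinuousOn H (Ioi 0))
    (hcc : ∀ J : Set ℝ, J ⊆ Ioi 0 → Convex ℝ J → (∀ y ∈ J, f y < H y) → ConcaveOn ℝ J f)
    (hgf : ∀ y, g y ≤ f y) (hfz : f z = g z) (hlt : g z < H z) :
    HasLocalConcaveMajorantAt g z := by
  have hnhds : Ioi (0 : ℝ) ∈ 𝓝 z := Ioi_mem_nhds hz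
  obtain ⟨ε, hε, hball⟩ := Metric.eventually_nhds_iff_ball.1 <| (eventually_gt_nhds hz).and <|
    (hf.continuousAt hnhds).eventually_lt (hH.continuousAt hnhds) (hfz ▸ hlt)
  exact ⟨f, hfz, Metric.ball z ε, Metric.ball_mem_nhds z hε,
    hcc _ (fun y hy => (hball y hy).1) (convex_ball z ε) (fun y hy => (hball y hy).2),
    fun y _ => hgf y⟩

theorem min_mem_H_general (H₁ H₂ h₁ h₂ : ℝ → ℝ)
    (hH₂ : ContinuousOn H₂ (Ioi 0))
    (hc₁ : ContinuousOn h₁ (Ioi 0)) (hc₂ : ContinuousOn h₂ (Ioi 0))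
    (hb₁ : ∀ y ∈ Ioi (0:ℝ), H₁ y ≤ h₁ y ∧ h₁ y ≤ H₂ y)
    (hb₂ : ∀ y ∈ Ioi (0:ℝ), H₁ y ≤ h₂ y ∧ h₂ y ≤ H₂ y)
    (hcc₁ : ∀ J : Set ℝ, J ⊆ Ioi 0 → Convex ℝ J → (∀ y ∈ J, h₁ y < H₂ y) →
      ConcaveOn ℝ J h₁)
    (hcc₂ : ∀ J : Set ℝ, J ⊆ Ioi 0 → Convex ℝ J → (∀ y ∈ J, h₂ y < H₂ y) →
      ConcaveOn ℝ J h₂) :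
    ContinuousOn (fun y => min (h₁ y) (h₂ y)) (Ioi 0) ∧
      (∀ y ∈ Ioi (0:ℝ), H₁ y ≤ min (h₁ y) (h₂ y) ∧ min (h₁ y) (h₂ y) ≤ H₂ y) ∧
      (∀ J : Set ℝ, J ⊆ Ioi 0 → Convex ℝ J → (∀ y ∈ J, min (h₁ y) (h₂ y) < H₂ y) →
        ConcaveOn ℝ J (fun y => min (h₁ y) (h₂ y))) := by
  have hc : ContinuousOn (fun y => min (h₁ y) (h₂ y)) (Ioi 0) := hc₁.inf hc₂
  refine ⟨hc, fun y hy => ⟨le_min (hb₁ y hy).1 (hb₂ y hy).1, min_le_of_left_le (hb₁ y hy).2⟩, ?_⟩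
  intro J hJ0 hJ hlt
  refine concaveOn_of_hasLocalConcaveMajorantAt hJ (hc.mono hJ0) fun z hz => ?_
  rcases min_choice (h₁ z) (h₂ z) with h | h
  · exact hasLocalConcaveMajorantAt_of_le (hJ0 hz) hc₁ hH₂ hcc₁ (fun _ => min_le_left _ _)
      h.symm (hlt z hz)
  · exact hasLocalConcaveMajorantAt_of_le (hJ0 hz) hc₂ hH₂ hcc₂ (fun _ => min_le_right _ _)
      h.symm (hlt z hz)

/-- The minimum of two continuous functions squeezed between `H₁` and `H₂` and concave on
every interval of strict minorization of `H₂` again has these properties. -/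
theorem min_mem_H (H₁ H₂ h₁ h₂ : ℝ → ℝ)
    (hH₁ : ContinuousOn H₁ (Ioi 0)) (hH₂ : ContinuousOn H₂ (Ioi 0))
    (hH₁₂ : ∀ y ∈ Ioi (0:ℝ), H₁ y ≤ H₂ y)
    (hc₁ : ContinuousOn h₁ (Ioi 0)) (hc₂ : ContinuousOn h₂ (Ioi 0))
    (hb₁ : ∀ y ∈ Ioi (0:ℝ), H₁ y ≤ h₁ y ∧ h₁ y ≤ H₂ y)
    (hb₂ : ∀ y ∈ Ioi (0:ℝ), H₁ y ≤ h₂ y ∧ h₂ y ≤ H₂ y)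
    (hcc₁ : ∀ J : Set ℝ, J ⊆ Ioi 0 → Convex ℝ J → (∀ y ∈ J, h₁ y < H₂ y) →
      ConcaveOn ℝ J h₁)
    (hcc₂ : ∀ J : Set ℝ, J ⊆ Ioi 0 → Convex ℝ J → (∀ y ∈ J, h₂ y < H₂ y) →
      ConcaveOn ℝ J h₂) :
    ContinuousOn (fun y => min (h₁ y) (h₂ y)) (Ioi 0) ∧
      (∀ y ∈ Ioi (0:ℝ), H₁ y ≤ min (h₁ y) (h₂ y) ∧ min (h₁ y) (h₂ y) ≤ H₂ y) ∧
      (∀ J : Set ℝ, J ⊆ Ioi 0 → Convex ℝ J → (∀ y ∈ J, min (h₁ y) (h₂ y) < H₂ y) →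
        ConcaveOn ℝ J (fun y => min (h₁ y) (h₂ y))) :=
  min_mem_H_general H₁ H₂ h₁ h₂ hH₂ hc₁ hc₂ hb₁ hb₂ hcc₁ hcc₂
end

section
/- Let {hₙ} be a decreasing sequence of continuous functions on (0,∞) with H₁ ≤ hₙ ≤ H₂, each concave on every open interval where hₙ < H₂. If h := infₙ hₙ satisfies h < H₂ on an open interval (l,r) with compact closure [l,r] contained in {y : h(y) < H₂(y)}, then h is concave on [l,r]. -/
open Set

/-- For a decreasing sequence of continuous functions `hₙ` between `H₁` and `H₂`, each concave
on every open interval where `hₙ < H₂`, the infimum `h = ⨅ₙ hₙ` is concave on a compact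
interval `[l, r] ⊆ (0, ∞)` on which `h < H₂`. -/
theorem iInf_concave_on_Icc (H₁ H₂ : ℝ → ℝ) (hseq : ℕ → ℝ → ℝ)
    (hH₁ : ContinuousOn H₁ (Ioi 0)) (hH₂ : ContinuousOn H₂ (Ioi 0))
    (hH₁₂ : ∀ y ∈ Ioi (0:ℝ), H₁ y ≤ H₂ y)
    (hcont : ∀ n, ContinuousOn (hseq n) (Ioi 0))
    (hdec : ∀ n, ∀ y ∈ Ioi (0:ℝ), hseq (n + 1) y ≤ hseq n y)
    (hbdd : ∀ n, ∀ y ∈ Ioi (0:ℝ), H₁ y ≤ hseq n y ∧ hseq n y ≤ H₂ y)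
    (hcc : ∀ n, ∀ a b : ℝ, Ioo a b ⊆ Ioi 0 → (∀ y ∈ Ioo a b, hseq n y < H₂ y) →
      ConcaveOn ℝ (Ioo a b) (hseq n))
    (l r : ℝ) (hl : 0 < l) (hlr : l < r)
    (hstrict : ∀ y ∈ Icc l r, (⨅ n, hseq n y) < H₂ y) :
    ConcaveOn ℝ (Icc l r) (fun y => ⨅ n, hseq n y) := by
  -- antitonicity in n
  have hanti : ∀ y ∈ Ioi (0:ℝ), Antitone (fun n => hseq n y) := by
    intro y hy
    exact antitone_nat_of_succ_le (fun n => hdec n y hy)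
  -- bddBelow
  have hbb : ∀ y ∈ Ioi (0:ℝ), BddBelow (range fun n => hseq n y) := by
    intro y hy
    exact ⟨H₁ y, by rintro z ⟨n, rfl⟩; exact (hbdd n y hy).1⟩
  -- the open sets
  set U : ℕ → Set ℝ := fun n => {y | 0 < y ∧ hseq n y < H₂ y} with hU
  have hUopen : ∀ n, IsOpen (U n) := by
    intro n
    have : U n = Ioi 0 ∩ (fun y => hseq n y - H₂ y) ⁻¹' (Iio 0) := by
      ext y; simp [hU, sub_neg, mem_Ioi, and_comm]
    rw [this]
    exact ContinuousOn.isOpen_inter_preimage ((hcont n).sub hH₂) isOpen_Ioi isOpen_Iio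
  have hUmono : ∀ {m k : ℕ}, m ≤ k → U m ⊆ U k := by
    intro m k hmk y hy
    exact ⟨hy.1, lt_of_le_of_lt (hanti y hy.1 hmk) hy.2⟩
  have hIccsub : Icc l r ⊆ Ioi (0:ℝ) := fun y hy => lt_of_lt_of_le hl hy.1
  -- cover
  have hcover : Icc l r ⊆ ⋃ n, U n := by
    intro y hy
    obtain ⟨n, hn⟩ := exists_lt_of_ciInf_lt (hstrict y hy)
    exact mem_iUnion.2 ⟨n, hIccsub hy, hn⟩
  obtain ⟨t, ht⟩ := (isCompact_Icc (a := l) (b := r)).elim_finite_subcover U hUopen hcover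
  set N := t.sup id with hN
  have hsubN : Icc l r ⊆ U N := by
    intro y hy
    obtain ⟨i, hit, hyi⟩ := mem_iUnion₂.1 (ht hy)
    exact hUmono (Finset.le_sup (f := id) hit) hyi
  -- thicken: find δ > 0 with Ioo (l-δ) (r+δ) ⊆ U N
  obtain ⟨δl, hδl, hballl⟩ := Metric.isOpen_iff.1 (hUopen N) l (hsubN ⟨le_refl l, le_of_lt hlr⟩)
  obtain ⟨δr, hδr, hballr⟩ := Metric.isOpen_iff.1 (hUopen N) r (hsubN ⟨le_of_lt hlr, le_refl r⟩)
  set δ := min δl δr with hδdef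
  have hδ : 0 < δ := lt_min hδl hδr
  have hsubIoo : Ioo (l - δ) (r + δ) ⊆ U N := by
    intro y hy
    rcases lt_or_ge y l with h1 | h1
    · apply hballl
      rw [Metric.mem_ball, Real.dist_eq, abs_lt]
      constructor
      · linarith [hy.1, min_le_left δl δr]
      · linarith [min_le_left δl δr]
    · rcases le_or_gt y r with h2 | h2
      · exact hsubN ⟨h1, h2⟩
      · apply hballr
        rw [Metric.mem_ball, Real.dist_eq, abs_lt]
        constructor
        · linarith [min_le_right δl δr]
        · linarith [hy.2, min_le_right δl δr]
  have hIoopos : Ioo (l - δ) (r + δ) ⊆ Ioi (0:ℝ) := fun y hy => (hsubIoo hy).1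
  -- concavity of tails on the open interval
  have hconc : ∀ m, N ≤ m → ConcaveOn ℝ (Ioo (l - δ) (r + δ)) (hseq m) := by
    intro m hm
    refine hcc m _ _ hIoopos (fun y hy => ?_)
    have := hsubIoo hy
    exact lt_of_le_of_lt (hanti y this.1 hm) this.2
  have hIccIoo : Icc l r ⊆ Ioo (l - δ) (r + δ) := by
    intro y hy
    exact ⟨by linarith [hy.1], by linarith [hy.2]⟩
  -- conclude
  refine ⟨convex_Icc l r, ?_⟩
  intro x hx y hy a b ha hb hab
  have hz : a • x + b • y ∈ Icc l r := (convex_Icc l r) hx hy ha hb hab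
  refine le_ciInf (fun m => ?_)
  set k := max m N with hk
  have h1 : hseq k (a • x + b • y) ≤ hseq m (a • x + b • y) :=
    hanti _ (hIccsub hz) (le_max_left m N)
  have h2 : a • hseq k x + b • hseq k y ≤ hseq k (a • x + b • y) :=
    (hconc k (le_max_right m N)).2 (hIccIoo hx) (hIccIoo hy) ha hb hab
  have h3 : (⨅ n, hseq n x) ≤ hseq k x := ciInf_le (hbb x (hIccsub hx)) k
  have h4 : (⨅ n, hseq n y) ≤ hseq k y := ciInf_le (hbb y (hIccsub hy)) k
  have := le_trans (le_trans (by
    simp only [smul_eq_mul]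
    nlinarith : a • (⨅ n, hseq n x) + b • (⨅ n, hseq n y) ≤ a • hseq k x + b • hseq k y) h2) h1
  exact this
end

section
/- Smooth-fit at a lower boundary: if H₁, W : (0,∞) → ℝ satisfy W ≥ H₁, W(y₁) = H₁(y₁), W is concave in a neighborhood of y₁, and the one-sided derivatives of H₁ at y₁ exist, then (d⁻/dy)H₁(y₁) ≥ (d⁻/dy)W(y₁) ≥ (d⁺/dy)W(y₁) ≥ (d⁺/dy)H₁(y₁). -/
open Set Filter Topology

/-- Smooth fit at a lower boundary: if `W ≥ H₁` on `(0, ∞)`, `W y₁ = H₁ y₁`, `W` is concave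
in a neighborhood of `y₁` and the one-sided derivatives of `H₁` exist at `y₁`, then the
one-sided derivatives of `W` at `y₁` exist and
`H₁'(y₁-) ≥ W'(y₁-) ≥ W'(y₁+) ≥ H₁'(y₁+)`. -/
theorem smooth_fit_lower (H₁ W : ℝ → ℝ) (y₁ : ℝ) (hy₁ : y₁ ∈ Ioi (0:ℝ))
    (hmaj : ∀ y ∈ Ioi (0:ℝ), H₁ y ≤ W y) (heq : W y₁ = H₁ y₁)
    (a b : ℝ) (hab : y₁ ∈ Ioo a b) (habsub : Ioo a b ⊆ Ioi 0)
    (hconc : ConcaveOn ℝ (Ioo a b) W)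
    (dm dp : ℝ)
    (hH₁m : HasDerivWithinAt H₁ dm (Iio y₁) y₁)
    (hH₁p : HasDerivWithinAt H₁ dp (Ioi y₁) y₁) :
    ∃ wm wp : ℝ, HasDerivWithinAt W wm (Iio y₁) y₁ ∧ HasDerivWithinAt W wp (Ioi y₁) y₁ ∧
      dm ≥ wm ∧ wm ≥ wp ∧ wp ≥ dp := by
  obtain ⟨hay, hyb⟩ := hab
  set g : ℝ → ℝ := fun x => (W x - W y₁) / (x - y₁) with hg
  -- the slope function from `y₁` is antitone on `Ioo a b \ {y₁}`
  have hanti : ∀ x ∈ Ioo a b, ∀ y ∈ Ioo a b, x ≠ y₁ → y ≠ y₁ → x ≤ y → g y ≤ g x := by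
    intro x hx y hy hxne hyne hxy
    have := hconc.neg.secant_mono (a := y₁) (x := x) (y := y) ⟨hay, hyb⟩ hx hy hxne hyne hxy
    simp only [Pi.neg_apply] at this
    have hx' : (-(W x) - -(W y₁)) / (x - y₁) = -g x := by rw [hg]; ring
    have hy' : (-(W y) - -(W y₁)) / (y - y₁) = -g y := by rw [hg]; ring
    rw [hx', hy'] at this
    linarith
  -- fixed reference points on each side
  obtain ⟨u₀, hu₀⟩ : (Ioo a y₁).Nonempty := nonempty_Ioo.2 hay
  obtain ⟨v₀, hv₀⟩ : (Ioo y₁ b).Nonempty := nonempty_Ioo.2 hyb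
  have hmemL : ∀ x ∈ Ioo a y₁, x ∈ Ioo a b := fun x hx => ⟨hx.1, hx.2.trans hyb⟩
  have hmemR : ∀ x ∈ Ioo y₁ b, x ∈ Ioo a b := fun x hx => ⟨hay.trans hx.1, hx.2⟩
  have hcross : ∀ x ∈ Ioo y₁ b, ∀ u ∈ Ioo a y₁, g x ≤ g u := fun x hx u hu =>
    hanti u (hmemL u hu) x (hmemR x hx) hu.2.ne hx.1.ne' (hu.2.le.trans hx.1.le)
  -- boundedness
  have hbddL : BddBelow (g '' Ioo a y₁) := by
    refine ⟨g v₀, ?_⟩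
    rintro _ ⟨u, hu, rfl⟩
    exact hcross v₀ hv₀ u hu
  have hbddR : BddAbove (g '' Ioo y₁ b) := by
    refine ⟨g u₀, ?_⟩
    rintro _ ⟨v, hv, rfl⟩
    exact hcross v hv u₀ hu₀
  set wm := sInf (g '' Ioo a y₁) with hwm
  set wp := sSup (g '' Ioo y₁ b) with hwp
  have hantiL : AntitoneOn g (Ioo a y₁) := fun x hx y hy hxy =>
    hanti x (hmemL x hx) y (hmemL y hy) hx.2.ne hy.2.ne hxy
  have hantiR : AntitoneOn g (Ioo y₁ b) := fun x hx y hy hxy =>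
    hanti x (hmemR x hx) y (hmemR y hy) hx.1.ne' hy.1.ne' hxy
  have htm : Tendsto g (𝓝[<] y₁) (𝓝 wm) :=
    hantiL.tendsto_nhdsWithin_Ioo_left ⟨u₀, hu₀⟩ hbddL
  have htp : Tendsto g (𝓝[>] y₁) (𝓝 wp) :=
    hantiR.tendsto_nhdsWithin_Ioo_right ⟨v₀, hv₀⟩ hbddR
  -- slope function equality
  have hgslope : g = slope W y₁ := by
    funext x
    rw [slope_def_field, hg]
  -- one-sided derivatives of W
  have hWm : HasDerivWithinAt W wm (Iio y₁) y₁ := by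
    rw [hasDerivWithinAt_iff_tendsto_slope' (notMem_Iio_self), ← hgslope]
    exact htm
  have hWp : HasDerivWithinAt W wp (Ioi y₁) y₁ := by
    rw [hasDerivWithinAt_iff_tendsto_slope' (notMem_Ioi_self), ← hgslope]
    exact htp
  refine ⟨wm, wp, hWm, hWp, ?_, ?_, ?_⟩
  · -- dm ≥ wm
    have hHm : Tendsto (slope H₁ y₁) (𝓝[<] y₁) (𝓝 dm) :=
      (hasDerivWithinAt_iff_tendsto_slope' (notMem_Iio_self)).1 hH₁m
    refine le_of_tendsto_of_tendsto htm hHm ?_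
    filter_upwards [Ioo_mem_nhdsLT hay] with x hx
    have hx0 : (0:ℝ) < x := habsub (hmemL x hx)
    have h1 : H₁ x ≤ W x := hmaj x hx0
    have hneg : x - y₁ < 0 := by linarith [hx.2]
    rw [slope_def_field, hg]
    exact (div_le_div_right_of_neg hneg).2 (by linarith)
  · -- wm ≥ wp
    refine csSup_le (Set.Nonempty.image g ⟨v₀, hv₀⟩) ?_
    rintro _ ⟨v, hv, rfl⟩
    refine le_csInf (Set.Nonempty.image g ⟨u₀, hu₀⟩) ?_
    rintro _ ⟨u, hu, rfl⟩
    exact hcross v hv u hu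
  · -- wp ≥ dp
    have hHp : Tendsto (slope H₁ y₁) (𝓝[>] y₁) (𝓝 dp) :=
      (hasDerivWithinAt_iff_tendsto_slope' (notMem_Ioi_self)).1 hH₁p
    refine le_of_tendsto_of_tendsto hHp htp ?_
    filter_upwards [Ioo_mem_nhdsGT hyb] with x hx
    have hx0 : (0:ℝ) < x := habsub (hmemR x hx)
    have h1 : H₁ x ≤ W x := hmaj x hx0
    have hpos : 0 < x - y₁ := by linarith [hx.1]
    rw [slope_def_field, hg]
    exact (div_le_div_iff_of_pos_right hpos).2 (by linarith)
end

section
/- Smooth-fit at an upper boundary: if H₂, W : (0,∞) → ℝ satisfy W ≤ H₂ on (0,∞), W(y₂) = H₂(y₂), W is convex in a neighborhood of y₂, and the one-sided derivatives of H₂ at y₂ exist, then (d⁻/dy)H₂(y₂) ≤ (d⁻/dy)W(y₂) ≤ (d⁺/dy)W(y₂) ≤ (d⁺/dy)H₂(y₂). -/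
open Set

/-- Smooth fit at an upper boundary: if `W ≤ H₂` on `(0, ∞)`, `W y₂ = H₂ y₂`, `W` is convex
in a neighborhood of `y₂` and the one-sided derivatives of `H₂` exist at `y₂`, then the
one-sided derivatives of `W` at `y₂` exist and
`H₂'(y₂-) ≤ W'(y₂-) ≤ W'(y₂+) ≤ H₂'(y₂+)`. -/
theorem smooth_fit_upper (H₂ W : ℝ → ℝ) (y₂ : ℝ) (hy₂ : y₂ ∈ Ioi (0:ℝ))
    (hmin : ∀ y ∈ Ioi (0:ℝ), W y ≤ H₂ y) (heq : W y₂ = H₂ y₂)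
    (a b : ℝ) (hab : y₂ ∈ Ioo a b) (habsub : Ioo a b ⊆ Ioi 0)
    (hconv : ConvexOn ℝ (Ioo a b) W)
    (dm dp : ℝ)
    (hH₂m : HasDerivWithinAt H₂ dm (Iio y₂) y₂)
    (hH₂p : HasDerivWithinAt H₂ dp (Ioi y₂) y₂) :
    ∃ wm wp : ℝ, HasDerivWithinAt W wm (Iio y₂) y₂ ∧ HasDerivWithinAt W wp (Ioi y₂) y₂ ∧
      dm ≤ wm ∧ wm ≤ wp ∧ wp ≤ dp := by
  obtain ⟨hay, hyb⟩ := hab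
  set g : ℝ → ℝ := slope W y₂ with hg
  have hy₂mem : y₂ ∈ Ioo a b := ⟨hay, hyb⟩
  -- secant monotonicity with base point y₂
  have hsec : ∀ u ∈ Ioo a b, ∀ v ∈ Ioo a b, u ≠ y₂ → v ≠ y₂ → u ≤ v → g u ≤ g v := by
    intro u hu v hv hu' hv' huv
    simp only [hg, slope_def_field]
    exact hconv.secant_mono hy₂mem hu hv hu' hv' huv
  have hmonoR : MonotoneOn g (Ioo y₂ b) := by
    intro u hu v hv huv
    exact hsec u ⟨hay.trans hu.1, hu.2⟩ v ⟨hay.trans hv.1, hv.2⟩ (ne_of_gt hu.1)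
      (ne_of_gt hv.1) huv
  have hmonoL : MonotoneOn g (Ioo a y₂) := by
    intro u hu v hv huv
    exact hsec u ⟨hu.1, hu.2.trans hyb⟩ v ⟨hv.1, hv.2.trans hyb⟩ (ne_of_lt hu.2)
      (ne_of_lt hv.2) huv
  -- left slopes ≤ right slopes
  have hLR : ∀ u ∈ Ioo a y₂, ∀ v ∈ Ioo y₂ b, g u ≤ g v := fun u hu v hv =>
    hsec u ⟨hu.1, hu.2.trans hyb⟩ v ⟨hay.trans hv.1, hv.2⟩ (ne_of_lt hu.2) (ne_of_gt hv.1)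
      (hu.2.trans hv.1).le
  have hneL : (Ioo a y₂).Nonempty := nonempty_Ioo.2 hay
  have hneR : (Ioo y₂ b).Nonempty := nonempty_Ioo.2 hyb
  obtain ⟨t₀, ht₀⟩ := id hneL
  obtain ⟨s₀, hs₀⟩ := id hneR
  have hbddR : BddBelow (g '' Ioo y₂ b) := by
    refine ⟨g t₀, ?_⟩
    rintro _ ⟨v, hv, rfl⟩
    exact hLR t₀ ht₀ v hv
  have hbddL : BddAbove (g '' Ioo a y₂) := by
    refine ⟨g s₀, ?_⟩
    rintro _ ⟨u, hu, rfl⟩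
    exact hLR u hu s₀ hs₀
  set wm := sSup (g '' Ioo a y₂) with hwm
  set wp := sInf (g '' Ioo y₂ b) with hwp
  have htm : Filter.Tendsto g (nhdsWithin y₂ (Iio y₂)) (nhds wm) :=
    MonotoneOn.tendsto_nhdsWithin_Ioo_left hneL hmonoL hbddL
  have htp : Filter.Tendsto g (nhdsWithin y₂ (Ioi y₂)) (nhds wp) :=
    MonotoneOn.tendsto_nhdsWithin_Ioo_right hneR hmonoR hbddR
  have hIio : Iio y₂ \ {y₂} = Iio y₂ := diff_singleton_eq_self (by simp)
  have hIoi : Ioi y₂ \ {y₂} = Ioi y₂ := diff_singleton_eq_self (by simp)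
  have hWm : HasDerivWithinAt W wm (Iio y₂) y₂ := by
    rw [hasDerivWithinAt_iff_tendsto_slope, hIio]; exact htm
  have hWp : HasDerivWithinAt W wp (Ioi y₂) y₂ := by
    rw [hasDerivWithinAt_iff_tendsto_slope, hIoi]; exact htp
  -- wm ≤ wp
  have hmp : wm ≤ wp := by
    refine csSup_le (hneL.image _) ?_
    rintro _ ⟨u, hu, rfl⟩
    refine le_csInf (hneR.image _) ?_
    rintro _ ⟨v, hv, rfl⟩
    exact hLR u hu v hv
  -- comparison with H₂ slopes
  have hHm : Filter.Tendsto (slope H₂ y₂) (nhdsWithin y₂ (Iio y₂)) (nhds dm) := by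
    have := hasDerivWithinAt_iff_tendsto_slope.1 hH₂m
    rwa [hIio] at this
  have hHp : Filter.Tendsto (slope H₂ y₂) (nhdsWithin y₂ (Ioi y₂)) (nhds dp) := by
    have := hasDerivWithinAt_iff_tendsto_slope.1 hH₂p
    rwa [hIoi] at this
  have key : ∀ x : ℝ, 0 < x → x ≠ y₂ →
      (x < y₂ → slope H₂ y₂ x ≤ g x) ∧ (y₂ < x → g x ≤ slope H₂ y₂ x) := by
    intro x hx hne
    have hWle : W x ≤ H₂ x := hmin x hx
    constructor
    · intro hlt
      have hd : x - y₂ < 0 := by linarith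
      simp only [hg, slope_def_field]
      rw [div_le_div_right_of_neg hd, heq]
      linarith
    · intro hlt
      have hd : 0 < x - y₂ := by linarith
      simp only [hg, slope_def_field]
      rw [div_le_div_iff_of_pos_right hd, heq]
      linarith
  have hdm : dm ≤ wm := by
    refine le_of_tendsto_of_tendsto hHm htm ?_
    filter_upwards [Ioo_mem_nhdsLT hy₂] with x hx
    exact (key x hx.1 (ne_of_lt hx.2)).1 hx.2
  have hdp : wp ≤ dp := by
    refine le_of_tendsto_of_tendsto htp hHp ?_
    filter_upwards [self_mem_nhdsWithin] with x hx
    exact (key x (hy₂.trans hx) (ne_of_gt hx)).2 hx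
  exact ⟨wm, wp, hWm, hWp, hdm, hmp, hdp⟩
end

section
/- Smooth-fit principle: let g, V : (0,∞) → ℝ with either V ≥ g everywhere and V(x₀) = g(x₀) with V concave near x₀, or V ≤ g everywhere and V(x₀) = g(x₀) with V convex near x₀. If g is differentiable at x₀, then V is differentiable at x₀ and V'(x₀) = g'(x₀). -/
/-!
At an interior point a convex `V` has one-sided derivatives with `V'₋(x₀) ≤ V'₊(x₀)`. If
`V ≤ g` near `x₀` with equality at `x₀`, the difference quotients of `V` lie below those of `g`
to the right of `x₀` and above them to the left, so `V'₊(x₀) ≤ g'(x₀) ≤ V'₋(x₀)` and all three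
coincide. The concave case is the convex one applied to `-V ≤ -g`.
-/

open Set Filter Topology

section SmoothFit

variable {f g : ℝ → ℝ} {x d l r : ℝ}

lemma HasDerivWithinAt.le_of_eventuallyLE_Ioi (hf : HasDerivWithinAt f r (Ioi x) x)
    (hg : HasDerivWithinAt g d (Ioi x) x) (hle : f ≤ᶠ[𝓝[>] x] g) (heq : f x = g x) :
    r ≤ d := by
  refine le_of_tendsto_of_tendsto ((hasDerivWithinAt_iff_tendsto_slope' self_notMem_Ioi).mp hf)
    ((hasDerivWithinAt_iff_tendsto_slope' self_notMem_Ioi).mp hg) ?_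
  filter_upwards [hle, self_mem_nhdsWithin] with y hfg (hxy : x < y)
  simp only [slope_def_field, heq]
  gcongr

lemma HasDerivWithinAt.le_of_eventuallyLE_Iio (hf : HasDerivWithinAt f l (Iio x) x)
    (hg : HasDerivWithinAt g d (Iio x) x) (hle : f ≤ᶠ[𝓝[<] x] g) (heq : f x = g x) :
    d ≤ l := by
  refine le_of_tendsto_of_tendsto ((hasDerivWithinAt_iff_tendsto_slope' self_notMem_Iio).mp hg)
    ((hasDerivWithinAt_iff_tendsto_slope' self_notMem_Iio).mp hf) ?_
  filter_upwards [hle, self_mem_nhdsWithin] with y hfg (hxy : y < x)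
  simp only [slope_def_field, heq]
  exact div_le_div_of_nonpos_of_le (sub_nonpos.mpr hxy.le) (sub_le_sub_right hfg _)

namespace ConvexOn

variable {S : Set ℝ}

lemma hasDerivAt_of_rightDeriv_le_of_le_leftDeriv (hf : ConvexOn ℝ S f) (hx : x ∈ interior S)
    (hr : derivWithin f (Ioi x) x ≤ d) (hl : d ≤ derivWithin f (Iio x) x) :
    HasDerivAt f d x := by
  have hlr := hf.leftDeriv_le_rightDeriv_of_mem_interior hx
  have hright := hf.hasDerivWithinAt_rightDeriv_of_mem_interior hx
  have hleft := hf.hasDerivWithinAt_leftDeriv_of_mem_interior hx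
  rw [le_antisymm hr (hl.trans hlr)] at hright
  rw [le_antisymm (hlr.trans hr) hl] at hleft
  exact hasDerivAt_iff_tendsto_slope_left_right.mpr
    ⟨(hasDerivWithinAt_iff_tendsto_slope' self_notMem_Iio).mp hleft,
      (hasDerivWithinAt_iff_tendsto_slope' self_notMem_Ioi).mp hright⟩

theorem hasDerivAt_of_eventuallyLE_of_eq (hf : ConvexOn ℝ S f) (hx : x ∈ interior S)
    (hg : HasDerivAt g d x) (hle : f ≤ᶠ[𝓝 x] g) (heq : f x = g x) : HasDerivAt f d x :=
  hf.hasDerivAt_of_rightDeriv_le_of_le_leftDeriv hx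
    ((hf.hasDerivWithinAt_rightDeriv_of_mem_interior hx).le_of_eventuallyLE_Ioi
      hg.hasDerivWithinAt (nhdsWithin_le_nhds hle) heq)
    ((hf.hasDerivWithinAt_leftDeriv_of_mem_interior hx).le_of_eventuallyLE_Iio
      hg.hasDerivWithinAt (nhdsWithin_le_nhds hle) heq)

end ConvexOn

theorem ConcaveOn.hasDerivAt_of_eventuallyLE_of_eq {S : Set ℝ} (hf : ConcaveOn ℝ S f)
    (hx : x ∈ interior S) (hg : HasDerivAt g d x) (hle : g ≤ᶠ[𝓝 x] f) (heq : f x = g x) :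
    HasDerivAt f d x := by
  have hneg : HasDerivAt (-f) (-d) x :=
    hf.neg.hasDerivAt_of_eventuallyLE_of_eq hx hg.neg (hle.mono fun _ h ↦ neg_le_neg h)
      (by simp [heq])
  simpa using hneg.neg

end SmoothFit

theorem smooth_fit_principle_general (g V : ℝ → ℝ) (x₀ : ℝ)
    (heq : V x₀ = g x₀) (d : ℝ) (hg : HasDerivAt g d x₀)
    (h : (∃ a b : ℝ, x₀ ∈ Ioo a b ∧ Ioo a b ⊆ Ioi 0 ∧ ConcaveOn ℝ (Ioo a b) V ∧
            ∀ x ∈ Ioi (0:ℝ), g x ≤ V x) ∨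
         (∃ a b : ℝ, x₀ ∈ Ioo a b ∧ Ioo a b ⊆ Ioi 0 ∧ ConvexOn ℝ (Ioo a b) V ∧
            ∀ x ∈ Ioi (0:ℝ), V x ≤ g x)) :
    HasDerivAt V d x₀ := by
  rcases h with ⟨a, b, hx, hsub, hV, hgV⟩ | ⟨a, b, hx, hsub, hV, hVg⟩
  · refine hV.hasDerivAt_of_eventuallyLE_of_eq (by rwa [interior_Ioo]) hg ?_ heq
    filter_upwards [Ioo_mem_nhds hx.1 hx.2] with y hy using hgV y (hsub hy)
  · refine hV.hasDerivAt_of_eventuallyLE_of_eq (by rwa [interior_Ioo]) hg ?_ heq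
    filter_upwards [Ioo_mem_nhds hx.1 hx.2] with y hy using hVg y (hsub hy)

/-- Smooth-fit principle: if `V` touches `g` at `x₀` from above (with `V` concave near `x₀`)
or from below (with `V` convex near `x₀`), and `g` is differentiable at `x₀`, then `V` is
differentiable at `x₀` with `V'(x₀) = g'(x₀)`. -/
theorem smooth_fit_principle (g V : ℝ → ℝ) (x₀ : ℝ) (hx₀ : x₀ ∈ Ioi (0:ℝ))
    (heq : V x₀ = g x₀) (d : ℝ) (hg : HasDerivAt g d x₀)
    (h : (∃ a b : ℝ, x₀ ∈ Ioo a b ∧ Ioo a b ⊆ Ioi 0 ∧ ConcaveOn ℝ (Ioo a b) V ∧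
            ∀ x ∈ Ioi (0:ℝ), g x ≤ V x) ∨
         (∃ a b : ℝ, x₀ ∈ Ioo a b ∧ Ioo a b ⊆ Ioi 0 ∧ ConvexOn ℝ (Ioo a b) V ∧
            ∀ x ∈ Ioi (0:ℝ), V x ≤ g x)) :
    HasDerivAt V d x₀ :=
  smooth_fit_principle_general g V x₀ heq d hg h
end

section
/- The function φ(x) = x ∫_x^∞ u^{-2} exp(−∫_1^u 2βz/σ²(z) dz) du, with β > 0 and σ continuous and positive on (0,∞), is convex on (0,∞), i.e. φ''(x) ≥ 0 wherever defined. -/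
/-!
Writing `g u = u⁻² exp (-∫₁ᵘ a)` with `a z = 2βz/σ(z)²`, the function `φ x = x ∫ₓ^∞ g` has
`φ' x = ∫ₓ^∞ g - x g x` and `φ'' x = -(2 g x + x g' x) = -(x² g)'(x) / x`. Since
`x² g x = exp (-∫₁ˣ a)` is decreasing because `a ≥ 0`, we get `φ'' ≥ 0`.
-/

open Set MeasureTheory

theorem hasDerivAt_integral_Ioi {g : ℝ → ℝ} {a x : ℝ} (hax : a < x)
    (hg : IntegrableOn g (Ioi a)) (hgx : ContinuousAt g x) :
    HasDerivAt (fun y => ∫ u in Ioi y, g u) (-g x) x := by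
  have htail : ∀ y ∈ Ioi a, ∫ u in Ioi y, g u = (∫ u in Ioi a, g u) - ∫ u in a..y, g u :=
    fun y hy => by rw [← intervalIntegral.integral_Ioi_sub_Ioi hg (le_of_lt hy), sub_sub_cancel]
  have hint : IntervalIntegrable g volume a x :=
    (intervalIntegrable_iff_integrableOn_Ioc_of_le hax.le).2 (hg.mono_set Ioc_subset_Ioi_self)
  have hmeas : StronglyMeasurableAtFilter g (nhds x) :=
    AEStronglyMeasurable.stronglyMeasurableAtFilter_of_mem hg.aestronglyMeasurable
      (Ioi_mem_nhds hax)
  exact ((intervalIntegral.integral_hasDerivAt_right hint hmeas hgx).const_sub _)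
    |>.congr_of_eventuallyEq (Filter.eventuallyEq_of_mem (Ioi_mem_nhds hax) htail)

theorem hasDerivAt_intervalIntegral_of_continuousOn_Ioi {f : ℝ → ℝ} {b c u : ℝ}
    (hf : ContinuousOn f (Ioi b)) (hc : b < c) (hu : b < u) :
    HasDerivAt (fun v => ∫ z in c..v, f z) (f u) u := by
  have hsub : uIcc c u ⊆ Ioi b := fun z hz => lt_of_lt_of_le (lt_min hc hu) hz.1
  exact intervalIntegral.integral_hasDerivAt_right (hf.mono hsub).intervalIntegrable
    (hf.stronglyMeasurableAtFilter isOpen_Ioi u hu) (hf.continuousAt (Ioi_mem_nhds hu))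

/-- The condition on `g` says that `x ↦ x² g x` is nonincreasing. -/
theorem convexOn_mul_integral_Ioi {g g' : ℝ → ℝ} {b : ℝ}
    (hint : ∀ x ∈ Ioi b, IntegrableOn g (Ioi x))
    (hg : ∀ x ∈ Ioi b, HasDerivAt g (g' x) x)
    (hg' : ∀ x ∈ Ioi b, 2 * g x + x * g' x ≤ 0) :
    ConvexOn ℝ (Ioi b) (fun x => x * ∫ u in Ioi x, g u) := by
  have htail : ∀ x ∈ Ioi b, HasDerivAt (fun y => ∫ u in Ioi y, g u) (-g x) x := fun x hx =>
    hasDerivAt_integral_Ioi (add_div_two_lt_right.2 hx)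
      (hint _ (mem_Ioi.2 (left_lt_add_div_two.2 hx))) (hg x hx).continuousAt
  have hf' : ∀ x ∈ Ioi b, HasDerivAt (fun y => y * ∫ u in Ioi y, g u)
      ((∫ u in Ioi x, g u) - x * g x) x := fun x hx =>
    ((hasDerivAt_id x).mul (htail x hx)).congr_deriv (by simp only [id]; ring)
  have hf'' : ∀ x ∈ Ioi b, HasDerivAt (fun y => (∫ u in Ioi y, g u) - y * g y)
      (-(2 * g x + x * g' x)) x := fun x hx =>
    ((htail x hx).sub ((hasDerivAt_id x).mul (hg x hx))).congr_deriv (by simp only [id]; ring)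
  refine convexOn_of_hasDerivWithinAt2_nonneg (convex_Ioi b)
    (f' := fun x => (∫ u in Ioi x, g u) - x * g x) (f'' := fun x => -(2 * g x + x * g' x))
    (fun x hx => (hf' x hx).continuousAt.continuousWithinAt) ?_ ?_ ?_ <;> rw [interior_Ioi]
  · exact fun x hx => (hf' x hx).hasDerivWithinAt
  · exact fun x hx => (hf'' x hx).hasDerivWithinAt
  · exact fun x hx => neg_nonneg.2 (hg' x hx)

theorem hasDerivAt_inv_sq_mul_exp_neg_integral {a : ℝ → ℝ} (ha : ContinuousOn a (Ioi 0))
    {u : ℝ} (hu : 0 < u) :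
    HasDerivAt (fun v => v⁻¹ ^ 2 * Real.exp (-∫ z in (1:ℝ)..v, a z))
      (-(2 * u⁻¹ + a u) * (u⁻¹ ^ 2 * Real.exp (-∫ z in (1:ℝ)..u, a z))) u := by
  have hinv : HasDerivAt (fun v : ℝ => v⁻¹ ^ 2) (-(2 * u⁻¹) * u⁻¹ ^ 2) u :=
    ((hasDerivAt_inv hu.ne').pow 2).congr_deriv (by ring)
  have hexp : HasDerivAt (fun v => Real.exp (-∫ z in (1:ℝ)..v, a z))
      (Real.exp (-∫ z in (1:ℝ)..u, a z) * -a u) u :=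
    (hasDerivAt_intervalIntegral_of_continuousOn_Ioi ha one_pos hu).neg.exp
  exact (hinv.mul hexp).congr_deriv (by ring)

theorem convexOn_mul_integral_Ioi_inv_sq_mul_exp_neg_integral {a : ℝ → ℝ}
    (ha : ContinuousOn a (Ioi 0)) (ha₀ : ∀ x ∈ Ioi (0:ℝ), 0 ≤ a x)
    (hint : ∀ x ∈ Ioi (0:ℝ), IntegrableOn
      (fun u => u⁻¹ ^ 2 * Real.exp (-∫ z in (1:ℝ)..u, a z)) (Ioi x)) :
    ConvexOn ℝ (Ioi 0)
      (fun x => x * ∫ u in Ioi x, u⁻¹ ^ 2 * Real.exp (-∫ z in (1:ℝ)..u, a z)) := by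
  refine convexOn_mul_integral_Ioi hint
    (fun x hx => hasDerivAt_inv_sq_mul_exp_neg_integral ha hx) fun x hx => ?_
  have hx : 0 < x := hx
  have htwo_mul_add : 2 * (x⁻¹ ^ 2 * Real.exp (-∫ z in (1:ℝ)..x, a z))
      + x * (-(2 * x⁻¹ + a x) * (x⁻¹ ^ 2 * Real.exp (-∫ z in (1:ℝ)..x, a z)))
      = -(a x * (x⁻¹ * Real.exp (-∫ z in (1:ℝ)..x, a z))) := by
    field_simp; ring
  rw [htwo_mul_add, neg_nonpos]
  have := ha₀ x hx
  positivity

/-- The decreasing solution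
`φ(x) = x ∫_x^∞ u⁻² exp(−∫_1^u 2βz/σ²(z) dz) du` is convex on `(0, ∞)`. -/
theorem phi_convex (β : ℝ) (hβ : 0 < β) (σ : ℝ → ℝ)
    (hσcont : ContinuousOn σ (Ioi 0)) (hσpos : ∀ x ∈ Ioi (0:ℝ), 0 < σ x)
    (hint : ∀ x ∈ Ioi (0:ℝ), IntegrableOn
      (fun u => u⁻¹ ^ 2 * Real.exp (-∫ z in (1:ℝ)..u, 2 * β * z / σ z ^ 2)) (Ioi x)) :
    ConvexOn ℝ (Ioi 0)
      (fun x => x * ∫ u in Ioi x,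
        u⁻¹ ^ 2 * Real.exp (-∫ z in (1:ℝ)..u, 2 * β * z / σ z ^ 2)) := by
  refine convexOn_mul_integral_Ioi_inv_sq_mul_exp_neg_integral ?_ (fun x hx => ?_) hint
  · exact (continuousOn_const.mul continuousOn_id).div (hσcont.pow 2)
      fun x hx => pow_ne_zero 2 (hσpos x hx).ne'
  · have hx : (0:ℝ) < x := hx
    have := hσpos x hx
    positivity
end

section
/- Let φ be a positive, convex, decreasing function on (0,∞) and F(x) = x/φ(x) strictly increasing. Then the function w(y) := 1/φ(F⁻¹(y)) = y/F⁻¹(y) is concave on the range of F. -/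
/-!
The hypograph of `w` is a sublevel set of the perspective `(y, v) ↦ v φ(y / v)` of `φ`:
for `y = F x` and `v > 0`, monotonicity of `F` gives `v ≤ y / x ↔ x ≤ y / v ↔ y ≤ F (y / v)
↔ v φ(y / v) ≤ 1`. The perspective of a convex function is jointly convex, so this sublevel
set is convex, hence `w` is concave.
-/

open Set

noncomputable def perspective (f : ℝ → ℝ) (p : ℝ × ℝ) : ℝ := p.2 * f (p.1 / p.2)

def perspectiveDomain (s : Set ℝ) : Set (ℝ × ℝ) := {p | 0 < p.2 ∧ p.1 / p.2 ∈ s}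

lemma div_add_div_eq_weighted {a b y₁ y₂ v₁ v₂ : ℝ} (hv₁ : v₁ ≠ 0) (hv₂ : v₂ ≠ 0)
    (hV : a * v₁ + b * v₂ ≠ 0) :
    (a * y₁ + b * y₂) / (a * v₁ + b * v₂) =
      a * v₁ / (a * v₁ + b * v₂) * (y₁ / v₁) + b * v₂ / (a * v₁ + b * v₂) * (y₂ / v₂) := by
  field_simp

theorem convexOn_perspective {s : Set ℝ} {f : ℝ → ℝ} (hf : ConvexOn ℝ s f) :
    ConvexOn ℝ (perspectiveDomain s) (perspective f) := by
  have hcomb : ∀ ⦃p⦄, p ∈ perspectiveDomain s →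
      ∀ ⦃q⦄, q ∈ perspectiveDomain s →
      ∀ ⦃a b : ℝ⦄, 0 ≤ a → 0 ≤ b → a + b = 1 →
        a • p + b • q ∈ perspectiveDomain s ∧
        perspective f (a • p + b • q) ≤ a • perspective f p + b • perspective f q := by
    rintro ⟨y₁, v₁⟩ ⟨hv₁, hy₁⟩ ⟨y₂, v₂⟩ ⟨hv₂, hy₂⟩ a b ha hb hab
    simp only [perspective, perspectiveDomain, Prod.smul_mk, Prod.mk_add_mk, smul_eq_mul,
      mem_ofPred_eq] at hv₁ hy₁ hv₂ hy₂ ⊢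
    have hV : 0 < a * v₁ + b * v₂ := convex_Ioi (0 : ℝ) hv₁ hv₂ ha hb hab
    -- with `V = a v₁ + b v₂`, `(a y₁ + b y₂) / V` is the convex combination of `y₁ / v₁` and
    -- `y₂ / v₂` with weights `a v₁ / V` and `b v₂ / V`
    have hα : 0 ≤ a * v₁ / (a * v₁ + b * v₂) := by positivity
    have hβ : 0 ≤ b * v₂ / (a * v₁ + b * v₂) := by positivity
    have hαβ : a * v₁ / (a * v₁ + b * v₂) + b * v₂ / (a * v₁ + b * v₂) = 1 := by
      rw [← add_div, div_self hV.ne']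
    rw [div_add_div_eq_weighted hv₁.ne' hv₂.ne' hV.ne']
    refine ⟨⟨hV, hf.1 hy₁ hy₂ hα hβ hαβ⟩, ?_⟩
    calc (a * v₁ + b * v₂) * f (a * v₁ / (a * v₁ + b * v₂) * (y₁ / v₁) +
            b * v₂ / (a * v₁ + b * v₂) * (y₂ / v₂))
        ≤ (a * v₁ + b * v₂) * (a * v₁ / (a * v₁ + b * v₂) * f (y₁ / v₁) +
            b * v₂ / (a * v₁ + b * v₂) * f (y₂ / v₂)) := by
          gcongr
          exact hf.2 hy₁ hy₂ hα hβ hαβ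
      _ = a * (v₁ * f (y₁ / v₁)) + b * (v₂ * f (y₂ / v₂)) := by
          field_simp
  exact ⟨fun p hp q hq a b ha hb hab => (hcomb hp hq ha hb hab).1,
    fun p hp q hq a b ha hb hab => (hcomb hp hq ha hb hab).2⟩

lemma le_div_iff_mem_perspective_sublevel {φ : ℝ → ℝ} (hpos : ∀ x ∈ Ioi (0:ℝ), 0 < φ x)
    (hmono : StrictMonoOn (fun x => x / φ x) (Ioi 0)) {x v : ℝ} (hx : 0 < x) (hv : 0 < v) :
    v ≤ x / φ x / x ↔ (x / φ x, v) ∈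
      {p ∈ perspectiveDomain (Ioi 0) | perspective φ p ≤ 1} := by
  have hy : 0 < x / φ x := div_pos hx (hpos x hx)
  have hyv : 0 < x / φ x / v := div_pos hy hv
  have hφ : 0 < φ (x / φ x / v) := hpos _ hyv
  simp only [perspective, perspectiveDomain, mem_ofPred_eq, mem_Ioi, hv, hyv, true_and]
  calc v ≤ x / φ x / x ↔ x ≤ x / φ x / v := by rw [le_div_iff₀ hx, le_div_iff₀ hv, mul_comm]
    _ ↔ x / φ x ≤ x / φ x / v / φ (x / φ x / v) := (hmono.le_iff_le hx hyv).symm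
    _ ↔ v * φ (x / φ x / v) ≤ 1 := by
      rw [le_div_iff₀ hφ, le_div_iff₀ hv, mul_assoc, mul_comm (φ _) v]
      exact mul_le_iff_le_one_right hy

theorem w_concave_general (φ : ℝ → ℝ)
    (hpos : ∀ x ∈ Ioi (0:ℝ), 0 < φ x)
    (hconv : ConvexOn ℝ (Ioi 0) φ)
    (hmono : StrictMonoOn (fun x => x / φ x) (Ioi 0))
    (Finv : ℝ → ℝ)
    (hFinv : ∀ x ∈ Ioi (0:ℝ), Finv (x / φ x) = x) :
    ConcaveOn ℝ ((fun x => x / φ x) '' Ioi 0) (fun y => y / Finv y) := by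
  have hFc : ContinuousOn (fun x => x / φ x) (Ioi 0) :=
    continuousOn_id.div (hconv.continuousOn isOpen_Ioi) fun x hx => (hpos x hx).ne'
  have hrange : Convex ℝ ((fun x => x / φ x) '' Ioi 0) := by
    rw [convex_iff_ordConnected]
    exact ((convex_Ioi (0:ℝ)).isPreconnected.image _ hFc).ordConnected
  refine ⟨hrange, ?_⟩
  rintro _ ⟨x₁, hx₁, rfl⟩ _ ⟨x₂, hx₂, rfl⟩ t u ht hu htu
  obtain ⟨x, hx, hxeq⟩ := hrange (mem_image_of_mem _ hx₁) (mem_image_of_mem _ hx₂) ht hu htu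
  have hgraph (x : ℝ) (hx : 0 < x) :
      (x / φ x, x / φ x / x) ∈ {p ∈ perspectiveDomain (Ioi 0) | perspective φ p ≤ 1} := by
    have := hpos x hx
    exact (le_div_iff_mem_perspective_sublevel hpos hmono hx (by positivity)).1 le_rfl
  have hcomb := (convexOn_perspective hconv).convex_le 1 (hgraph x₁ hx₁) (hgraph x₂ hx₂) ht hu htu
  simp only [Prod.smul_mk, Prod.mk_add_mk, smul_eq_mul] at hcomb hxeq ⊢
  rw [← hxeq] at hcomb ⊢
  rw [hFinv x hx, hFinv x₁ hx₁, hFinv x₂ hx₂]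
  exact (le_div_iff_mem_perspective_sublevel hpos hmono hx hcomb.1.1).2 hcomb

/-- If `φ` is positive, decreasing and convex on `(0, ∞)` and `F(x) = x/φ(x)` is strictly
increasing with inverse `Finv`, then `w(y) = y / F⁻¹(y) = 1/φ(F⁻¹(y))` is concave on the
range of `F`. -/
theorem w_concave (φ : ℝ → ℝ)
    (hpos : ∀ x ∈ Ioi (0:ℝ), 0 < φ x)
    (hdec : AntitoneOn φ (Ioi 0))
    (hconv : ConvexOn ℝ (Ioi 0) φ)
    (hmono : StrictMonoOn (fun x => x / φ x) (Ioi 0))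
    (Finv : ℝ → ℝ)
    (hFinv : ∀ x ∈ Ioi (0:ℝ), Finv (x / φ x) = x) :
    ConcaveOn ℝ ((fun x => x / φ x) '' Ioi 0) (fun y => y / Finv y) :=
  w_concave_general φ hpos hconv hmono Finv hFinv
end

section
/- Suppose w : (0,∞) → (0,∞) is concave with y − K w(y) ≤ 0 iff y ≤ y_K, H₁(y) = (y − K w(y))⁺, H₂ = H₁ + ε w, 0 < ε < K, lim_{y→∞} H₁(y)/y = 1, H₂'(y) < 1 for all y, and H₂'(y_K+) > H₂(y_K)/y_K. Then the function W defined by W(y) = (H₂(y_K)/y_K)·y for y ≤ y_K and W(y) = H₂(y) for y > y_K is the smallest continuous function h with H₁ ≤ h ≤ H₂ that is concave on every interval where h < H₂. -/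
open Set Filter Topology


private lemma chord_concave {s : Set ℝ} {f : ℝ → ℝ} (hf : ConcaveOn ℝ s f) {x y z : ℝ}
    (hx : x ∈ s) (hz : z ∈ s) (h1 : x < y) (h2 : y < z) :
    (z - y) * f x + (y - x) * f z ≤ (z - x) * f y := by
  have hzx : (0:ℝ) < z - x := by linarith
  have h := hf.2 hx hz
    (show (0:ℝ) ≤ (z - y)/(z - x) from div_nonneg (by linarith) (by linarith))
    (show (0:ℝ) ≤ (y - x)/(z - x) from div_nonneg (by linarith) (by linarith))
    (by field_simp; ring)
  rw [smul_eq_mul, smul_eq_mul, smul_eq_mul, smul_eq_mul] at h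
  have hyy : (z - y)/(z - x) * x + (y - x)/(z - x) * z = y := by field_simp; ring
  rw [hyy] at h
  rw [div_mul_eq_mul_div, div_mul_eq_mul_div, ← add_div, div_le_iff₀ hzx] at h
  linarith

private lemma chord_convex {s : Set ℝ} {f : ℝ → ℝ} (hf : ConvexOn ℝ s f) {x y z : ℝ}
    (hx : x ∈ s) (hz : z ∈ s) (h1 : x < y) (h2 : y < z) :
    (z - x) * f y ≤ (z - y) * f x + (y - x) * f z := by
  have hzx : (0:ℝ) < z - x := by linarith
  have h := hf.2 hx hz
    (show (0:ℝ) ≤ (z - y)/(z - x) from div_nonneg (by linarith) (by linarith))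
    (show (0:ℝ) ≤ (y - x)/(z - x) from div_nonneg (by linarith) (by linarith))
    (by field_simp; ring)
  rw [smul_eq_mul, smul_eq_mul, smul_eq_mul, smul_eq_mul] at h
  have hyy : (z - y)/(z - x) * x + (y - x)/(z - x) * z = y := by field_simp; ring
  rw [hyy] at h
  rw [div_mul_eq_mul_div, div_mul_eq_mul_div, ← add_div, le_div_iff₀ hzx] at h
  linarith

private lemma convexOn_congr {s : Set ℝ} {f g : ℝ → ℝ} (hf : ConvexOn ℝ s f)
    (h : ∀ x ∈ s, f x = g x) : ConvexOn ℝ s g :=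
  ⟨hf.1, fun x hx y hy a b ha hb hab => by
    rw [← h _ hx, ← h _ hy, ← h _ (hf.1 hx hy ha hb hab)]; exact hf.2 hx hy ha hb hab⟩

private lemma concave_extend_chord {f : ℝ → ℝ} {a b : ℝ}
    (hcv : ConcaveOn ℝ (Ioo a b) f) (hfa : Tendsto f (𝓝 a) (𝓝 (f a)))
    (hfb : Tendsto f (𝓝 b) (𝓝 (f b))) :
    ∀ y ∈ Ioo a b, ((b - y) * f a + (y - a) * f b) / (b - a) ≤ f y := by
  intro y hy
  have step1 : ∀ u ∈ Ioo y b, ((u - y) * f a + (y - a) * f u) / (u - a) ≤ f y := by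
    intro u hu
    have hua : (0:ℝ) < u - a := by linarith [hy.1, hu.1]
    have key : ∀ x ∈ Ioo a y, ((u - y) * f x + (y - x) * f u) / (u - x) ≤ f y := by
      intro x hx
      have h1 := chord_concave hcv (⟨hx.1, lt_trans (lt_trans hx.2 hu.1) hu.2⟩ : x ∈ Ioo a b)
        (⟨lt_trans hy.1 hu.1, hu.2⟩ : u ∈ Ioo a b) hx.2 hu.1
      rw [div_le_iff₀ (by linarith [hx.2, hu.1] : (0:ℝ) < u - x)]
      linarith
    have hten : Tendsto (fun x => ((u - y) * f x + (y - x) * f u) / (u - x)) (𝓝[>] a)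
        (𝓝 (((u - y) * f a + (y - a) * f u) / (u - a))) := by
      have T : Tendsto (fun x => ((u - y) * f x + (y - x) * f u) / (u - x)) (𝓝 a)
          (𝓝 (((u - y) * f a + (y - a) * f u) / (u - a))) := by
        exact ((tendsto_const_nhds.mul hfa).add
          (((tendsto_const_nhds.sub tendsto_id).mul tendsto_const_nhds))).div
          (tendsto_const_nhds.sub tendsto_id) (ne_of_gt hua)
      exact T.mono_left nhdsWithin_le_nhds
    refine le_of_tendsto hten ?_
    filter_upwards [Ioo_mem_nhdsGT hy.1] with x hx
    exact key x hx
  have hba : (0:ℝ) < b - a := by linarith [hy.1, hy.2]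
  have hten2 : Tendsto (fun u => ((u - y) * f a + (y - a) * f u) / (u - a)) (𝓝[<] b)
      (𝓝 (((b - y) * f a + (y - a) * f b) / (b - a))) := by
    have T : Tendsto (fun u => ((u - y) * f a + (y - a) * f u) / (u - a)) (𝓝 b)
        (𝓝 (((b - y) * f a + (y - a) * f b) / (b - a))) := by
      exact (((tendsto_id.sub tendsto_const_nhds).mul tendsto_const_nhds).add
        (tendsto_const_nhds.mul hfb)).div
        (tendsto_id.sub tendsto_const_nhds) (ne_of_gt hba)
    exact T.mono_left nhdsWithin_le_nhds
  refine le_of_tendsto hten2 ?_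
  filter_upwards [Ioo_mem_nhdsLT hy.2] with u hu
  exact step1 u hu

private lemma concave_extend_chord_zero {f : ℝ → ℝ} {b : ℝ} (hb : 0 < b)
    (hcv : ConcaveOn ℝ (Ioo 0 b) f) (hpos : ∀ x ∈ Ioo (0:ℝ) b, 0 ≤ f x)
    (hfb : Tendsto f (𝓝 b) (𝓝 (f b))) :
    ∀ y ∈ Ioo 0 b, (y / b) * f b ≤ f y := by
  intro y hy
  have step1 : ∀ u ∈ Ioo y b, (y / u) * f u ≤ f y := by
    intro u hu
    have hu0 : (0:ℝ) < u := lt_trans hy.1 hu.1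
    have key : ∀ x ∈ Ioo (0:ℝ) y, ((y - x)/(u - x)) * f u ≤ f y := by
      intro x hx
      have h1 := chord_concave hcv (⟨hx.1, lt_trans (lt_trans hx.2 hu.1) hu.2⟩ : x ∈ Ioo 0 b)
        (⟨hu0, hu.2⟩ : u ∈ Ioo 0 b) hx.2 hu.1
      have hfx : 0 ≤ f x := hpos x ⟨hx.1, lt_trans hx.2 hy.2⟩
      rw [div_mul_eq_mul_div, div_le_iff₀ (by linarith [hx.2, hu.1] : (0:ℝ) < u - x)]
      nlinarith [hu.1]
    have hten : Tendsto (fun x => ((y - x)/(u - x)) * f u) (𝓝[>] (0:ℝ))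
        (𝓝 ((y / u) * f u)) := by
      have T : Tendsto (fun x => ((y - x)/(u - x)) * f u) (𝓝 (0:ℝ))
          (𝓝 (((y - 0)/(u - 0)) * f u)) := by
        exact (((tendsto_const_nhds.sub tendsto_id).div
          (tendsto_const_nhds.sub tendsto_id) (by simpa using ne_of_gt hu0)).mul
          tendsto_const_nhds)
      simpa using T.mono_left nhdsWithin_le_nhds
    refine le_of_tendsto hten ?_
    filter_upwards [Ioo_mem_nhdsGT hy.1] with x hx
    exact key x hx
  have hten2 : Tendsto (fun u => (y / u) * f u) (𝓝[<] b) (𝓝 ((y / b) * f b)) := by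
    exact ((tendsto_const_nhds.div tendsto_id (ne_of_gt hb)).mul hfb).mono_left
      nhdsWithin_le_nhds
  refine le_of_tendsto hten2 ?_
  filter_upwards [Ioo_mem_nhdsLT hy.2] with u hu
  exact step1 u hu

set_option maxHeartbeats 1000000 in
/-- Game call option: with `H₁(y) = (y − K w(y))⁺`, `H₂ = H₁ + ε w`, `0 < ε < K`, `w`
positive and concave, unique crossing point `y_K` (`y − K w(y) ≤ 0 ↔ y ≤ y_K`),
`H₁(y)/y → 1` at `∞`, right derivative of `H₂` everywhere `< 1` and
`H₂'(y_K+) > H₂(y_K)/y_K`, the function `W` equal to `(H₂(y_K)/y_K)·y` on `(0, y_K]` and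
to `H₂` on `(y_K, ∞)` is the smallest nonnegative continuous function `h` with
`H₁ ≤ h ≤ H₂` that is concave on every interval where `h < H₂`. -/
theorem game_call_value (w : ℝ → ℝ) (K ε y_K : ℝ)
    (hε : 0 < ε) (hεK : ε < K) (hyK : 0 < y_K)
    (hwpos : ∀ y ∈ Ioi (0:ℝ), 0 < w y)
    (hwconc : ConcaveOn ℝ (Ioi 0) w)
    (H₁ H₂ W : ℝ → ℝ)
    (hH₁ : H₁ = fun y => max (y - K * w y) 0)
    (hH₂ : H₂ = fun y => max (y - K * w y) 0 + ε * w y)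
    (hcross : ∀ y ∈ Ioi (0:ℝ), y - K * w y ≤ 0 ↔ y ≤ y_K)
    (hlim : Tendsto (fun y => H₁ y / y) atTop (𝓝 1))
    (d : ℝ → ℝ)
    (hd : ∀ y ∈ Ioi (0:ℝ), HasDerivWithinAt H₂ (d y) (Ioi y) y ∧ d y < 1)
    (hdK : H₂ y_K / y_K < d y_K)
    (hW : W = fun y => if y ≤ y_K then H₂ y_K / y_K * y else H₂ y) :
    (ContinuousOn W (Ioi 0) ∧
      (∀ y ∈ Ioi (0:ℝ), 0 ≤ W y ∧ H₁ y ≤ W y ∧ W y ≤ H₂ y) ∧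
      (∀ J : Set ℝ, J ⊆ Ioi 0 → Convex ℝ J → (∀ y ∈ J, W y < H₂ y) →
        ConcaveOn ℝ J W)) ∧
    (∀ h : ℝ → ℝ,
      ContinuousOn h (Ioi 0) →
      (∀ y ∈ Ioi (0:ℝ), 0 ≤ h y ∧ H₁ y ≤ h y ∧ h y ≤ H₂ y) →
      (∀ J : Set ℝ, J ⊆ Ioi 0 → Convex ℝ J → (∀ y ∈ J, h y < H₂ y) →
        ConcaveOn ℝ J h) →
      ∀ y ∈ Ioi (0:ℝ), W y ≤ h y) := by
  have hwcont : ContinuousOn w (Ioi 0) := hwconc.continuousOn isOpen_Ioi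
  have hyK' : y_K ∈ Ioi (0:ℝ) := hyK
  have hwKpos : 0 < w y_K := hwpos _ hyK'
  set c : ℝ := H₂ y_K / y_K with hcdef
  -- basic positivity of the crossing function to the right
  have hpos_right : ∀ y : ℝ, y_K < y → 0 < y - K * w y := by
    intro y hy
    have hy0 : y ∈ Ioi (0:ℝ) := lt_trans hyK hy
    by_contra hc
    push_neg at hc
    exact absurd ((hcross y hy0).mp hc) (not_le.mpr hy)
  -- y_K - K w y_K = 0
  have hF2 : y_K - K * w y_K = 0 := by
    have hle : y_K - K * w y_K ≤ 0 := (hcross y_K hyK').mpr le_rfl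
    have hcw : ContinuousAt (fun y => y - K * w y) y_K :=
      continuousAt_id.sub (continuousAt_const.mul
        (hwcont.continuousAt (isOpen_Ioi.mem_nhds hyK')))
    have hten : Tendsto (fun y => y - K * w y) (𝓝[>] y_K) (𝓝 (y_K - K * w y_K)) :=
      hcw.tendsto.mono_left nhdsWithin_le_nhds
    have hge : 0 ≤ y_K - K * w y_K := by
      refine ge_of_tendsto hten ?_
      filter_upwards [self_mem_nhdsWithin] with y hy
      exact le_of_lt (hpos_right y hy)
    linarith
  have hH₂eq1 : ∀ y : ℝ, 0 < y → y ≤ y_K → H₂ y = ε * w y := by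
    intro y h1 h2
    have hle : y - K * w y ≤ 0 := (hcross y h1).mpr h2
    simp only [hH₂]
    rw [max_eq_right hle, zero_add]
  have hH₂eq2 : ∀ y : ℝ, y_K ≤ y → H₂ y = y - (K - ε) * w y := by
    intro y h2
    have hge : 0 ≤ y - K * w y := by
      rcases eq_or_lt_of_le h2 with he | hlt
      · rw [← he, hF2]
      · exact le_of_lt (hpos_right y hlt)
    simp only [hH₂]
    rw [max_eq_left hge]
    ring
  have hH₂K : H₂ y_K = ε * w y_K := hH₂eq1 y_K hyK le_rfl
  have hH₂Kpos : 0 < H₂ y_K := by rw [hH₂K]; positivity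
  have hcpos : 0 < c := div_pos hH₂Kpos hyK
  have hc1 : c < 1 := lt_trans hdK (hd y_K hyK').2
  have hcyK : c * y_K = H₂ y_K := div_mul_cancel₀ _ (ne_of_gt hyK)
  -- w ratio from concavity
  have hwratio : ∀ x y : ℝ, 0 < x → x ≤ y → (x / y) * w y ≤ w x := by
    intro x y hx hxy
    rcases eq_or_lt_of_le hxy with rfl | hlt
    · rw [div_self (ne_of_gt hx), one_mul]
    · have hy : 0 < y := lt_trans hx hlt
      have key : ∀ z ∈ Ioo (0:ℝ) x, ((x - z)/(y - z)) * w y ≤ w x := by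
        intro z hz
        have hzy : z < y := lt_trans hz.2 hlt
        have hc := chord_concave hwconc (mem_Ioi.mpr hz.1) (mem_Ioi.mpr hy) hz.2 hlt
        have hwz : 0 < w z := hwpos z hz.1
        have hyz : (0:ℝ) < y - z := by linarith
        rw [div_mul_eq_mul_div, div_le_iff₀ hyz]
        nlinarith
      have htend : Tendsto (fun z => ((x - z)/(y - z)) * w y) (𝓝[>] (0:ℝ))
          (𝓝 ((x / y) * w y)) := by
        have T : Tendsto (fun z => ((x - z)/(y - z)) * w y) (𝓝 (0:ℝ))
            (𝓝 (((x - 0)/(y - 0)) * w y)) :=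
          ((tendsto_const_nhds.sub tendsto_id).div
            (tendsto_const_nhds.sub tendsto_id) (by simpa using ne_of_gt hy)).mul
            tendsto_const_nhds
        simpa using T.mono_left nhdsWithin_le_nhds
      refine le_of_tendsto htend ?_
      filter_upwards [Ioo_mem_nhdsGT hx] with z hz
      exact key z hz
  -- c * y ≤ H₂ y on (0, y_K]
  have hcleH₂ : ∀ y : ℝ, 0 < y → y ≤ y_K → c * y ≤ H₂ y := by
    intro y h1 h2
    have hr := hwratio y y_K h1 h2
    have hceq : c * y = ε * ((y / y_K) * w y_K) := by
      rw [hcdef, hH₂K]; field_simp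
    rw [hceq, hH₂eq1 y h1 h2]
    exact mul_le_mul_of_nonneg_left hr (le_of_lt hε)
  -- W equations
  have hWeq1 : ∀ y : ℝ, y ≤ y_K → W y = c * y := by
    intro y hy; rw [hW]; simp [hy]
  have hWeq2 : ∀ y : ℝ, y_K < y → W y = H₂ y := by
    intro y hy; rw [hW]; simp [not_le.mpr hy]
  have hWK : W y_K = H₂ y_K := by rw [hWeq1 y_K le_rfl, hcyK]
  -- H₁ facts
  have hH₁nonneg : ∀ y : ℝ, 0 ≤ H₁ y := by
    intro y; simp only [hH₁]; exact le_max_right _ _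
  have hH₁leH₂ : ∀ y : ℝ, 0 < y → H₁ y ≤ H₂ y := by
    intro y hy; simp only [hH₁, hH₂]
    nlinarith [hwpos y hy]
  have hH₁eq0 : ∀ y : ℝ, 0 < y → y ≤ y_K → H₁ y = 0 := by
    intro y h1 h2; simp only [hH₁]
    exact max_eq_right ((hcross y h1).mpr h2)
  -- W bounds
  have hWleH₂ : ∀ y : ℝ, 0 < y → W y ≤ H₂ y := by
    intro y hy
    rcases le_or_gt y y_K with h2 | h2
    · rw [hWeq1 y h2]; exact hcleH₂ y hy h2
    · rw [hWeq2 y h2]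
  have hWnonneg : ∀ y : ℝ, 0 < y → 0 ≤ W y := by
    intro y hy
    rcases le_or_gt y y_K with h2 | h2
    · rw [hWeq1 y h2]; positivity
    · rw [hWeq2 y h2]
      simp only [hH₂]
      have := hwpos y hy
      nlinarith [le_max_right (y - K * w y) (0:ℝ)]
  have hH₁leW : ∀ y : ℝ, 0 < y → H₁ y ≤ W y := by
    intro y hy
    rcases le_or_gt y y_K with h2 | h2
    · rw [hH₁eq0 y hy h2]; exact hWnonneg y hy
    · rw [hWeq2 y h2]; exact hH₁leH₂ y hy
  -- continuity of H₂
  have hH₂cont : ContinuousOn H₂ (Ioi 0) := by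
    rw [hH₂]
    exact ((continuousOn_id.sub (continuousOn_const.mul hwcont)).sup
      continuousOn_const).add (continuousOn_const.mul hwcont)
  have hH₂contAt : ∀ y : ℝ, 0 < y → ContinuousAt H₂ y := fun y hy =>
    hH₂cont.continuousAt (isOpen_Ioi.mem_nhds hy)
  -- continuity of W
  have hWcont : ContinuousOn W (Ioi 0) := by
    intro x hx
    rcases lt_trichotomy x y_K with hlt | heq | hgt
    · have hcw : ContinuousWithinAt (fun y => c * y) (Ioi 0) x :=
        (continuous_const.mul continuous_id).continuousWithinAt
      refine hcw.congr_of_eventuallyEq ?_ (hWeq1 x (le_of_lt hlt))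
      filter_upwards [nhdsWithin_le_nhds (Iio_mem_nhds hlt)] with y hy
      exact hWeq1 y (le_of_lt hy)
    · subst heq
      have : ContinuousAt W x := by
        rw [ContinuousAt, ← nhdsLE_sup_nhdsGT x, tendsto_sup]
        constructor
        · have T : Tendsto (fun y => c * y) (𝓝[≤] x) (𝓝 (c * x)) :=
            ((continuous_const.mul continuous_id).tendsto x).mono_left nhdsWithin_le_nhds
          refine Tendsto.congr' ?_ (by rwa [← hWeq1 x le_rfl] at T)
          filter_upwards [self_mem_nhdsWithin] with y hy
          exact (hWeq1 y hy).symm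
        · have T : Tendsto H₂ (𝓝[>] x) (𝓝 (H₂ x)) :=
            (hH₂contAt x hx).tendsto.mono_left nhdsWithin_le_nhds
          refine Tendsto.congr' ?_ (by rwa [← hWK] at T)
          filter_upwards [self_mem_nhdsWithin] with y hy
          exact (hWeq2 y hy).symm
      exact this.continuousWithinAt
    · refine (hH₂cont x hx).congr_of_eventuallyEq ?_ (hWeq2 x hgt)
      filter_upwards [nhdsWithin_le_nhds (Ioi_mem_nhds hgt)] with y hy
      exact hWeq2 y hy
  -- concavity of W on intervals where W < H₂
  have hWconcave : ∀ J : Set ℝ, J ⊆ Ioi 0 → Convex ℝ J → (∀ y ∈ J, W y < H₂ y) →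
      ConcaveOn ℝ J W := by
    intro J hJ hJconv hJlt
    have hlin : ∀ y ∈ J, W y = c * y := by
      intro y hy
      have : y ≤ y_K := by
        by_contra hc
        push_neg at hc
        exact absurd (hWeq2 y hc) (ne_of_lt (hJlt y hy))
      exact hWeq1 y this
    refine ⟨hJconv, fun x hx y hy a b ha hb hab => ?_⟩
    have hxy : a • x + b • y ∈ J := hJconv hx hy ha hb hab
    rw [hlin _ hxy, hlin _ hx, hlin _ hy]
    simp only [smul_eq_mul]
    exact le_of_eq (by ring)
    -- H₂ grows strictly slower than slope 1
  have hH₂slope : ∀ x z : ℝ, 0 < x → x < z → H₂ z - H₂ x < z - x := by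
    intro x z hx hxz
    have nonstrict : ∀ u v : ℝ, 0 < u → u ≤ v → H₂ v ≤ H₂ u + (v - u) := by
      intro u v hu huv
      have hIcc : Icc u v ⊆ Ioi 0 := fun t ht => lt_of_lt_of_le hu ht.1
      have := image_le_of_deriv_right_le_deriv_boundary (f := H₂) (f' := d) (a := u) (b := v)
        (hH₂cont.mono hIcc)
        (fun p hp => ((hd p (hIcc ⟨hp.1, le_of_lt hp.2⟩)).1).Ici_of_Ioi)
        (B := fun y => H₂ u + (y - u)) (B' := fun _ => (1:ℝ))
        (by simp)
        (by fun_prop)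
        (fun p hp => (((hasDerivAt_id p).sub_const u).const_add (H₂ u)).hasDerivWithinAt)
        (fun p hp => le_of_lt (hd p (hIcc ⟨hp.1, le_of_lt hp.2⟩)).2)
      exact this (right_mem_Icc.mpr huv)
    -- strict step near x
    have hdx := hd x hx
    have hslope : Tendsto (fun z' => (H₂ z' - H₂ x) / (z' - x)) (𝓝[>] x) (𝓝 (d x)) := by
      have := hasDerivWithinAt_iff_tendsto_slope.mp hdx.1
      rw [show Ioi x \ {x} = Ioi x from Set.diff_singleton_eq_self (by simp)] at this
      refine this.congr fun z' => ?_
      rw [slope_def_field]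
    have hev : ∀ᶠ z' in 𝓝[>] x, (H₂ z' - H₂ x) / (z' - x) < 1 ∧ z' ∈ Ioo x z := by
      filter_upwards [hslope.eventually (eventually_lt_nhds hdx.2),
        Ioo_mem_nhdsGT hxz] with z' h1 h2
      exact ⟨h1, h2⟩
    obtain ⟨x', hx'⟩ := hev.exists
    have hx'0 : 0 < x' := lt_trans hx hx'.2.1
    have hstep : H₂ x' - H₂ x < x' - x := by
      have := (div_lt_one (by linarith [hx'.2.1] : (0:ℝ) < x' - x)).mp hx'.1
      linarith
    have := nonstrict x' z hx'0 (le_of_lt hx'.2.2)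
    linarith
  -- H₂ is convex on [y_K, ∞)
  have hH₂conv : ConvexOn ℝ (Ici y_K) H₂ := by
    have hsub : Ici y_K ⊆ Ioi (0:ℝ) := fun t ht => lt_of_lt_of_le hyK ht
    have hwc : ConcaveOn ℝ (Ici y_K) w := hwconc.subset hsub (convex_Ici _)
    have h1 : ConvexOn ℝ (Ici y_K) (fun y => y + (-((K - ε) • w)) y) :=
      (convexOn_id (convex_Ici _)).add (hwc.smul (by linarith : (0:ℝ) ≤ K - ε)).neg
    refine convexOn_congr h1 fun x hx => ?_
    simp only [Pi.neg_apply, Pi.smul_apply, smul_eq_mul]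
    rw [hH₂eq2 x hx]
    ring
  -- tangent line bound at y_K
  have hH₂tangent : ∀ b : ℝ, y_K < b → H₂ y_K + d y_K * (b - y_K) ≤ H₂ b := by
    intro b hb
    have hslope_mono : ∀ u : ℝ, y_K < u → u < b →
        (H₂ u - H₂ y_K) / (u - y_K) ≤ (H₂ b - H₂ y_K) / (b - y_K) := by
      intro u h1 h2
      have hc := chord_convex hH₂conv (self_mem_Ici) (mem_Ici.mpr (le_of_lt hb)) h1 h2
      rw [div_le_div_iff₀ (by linarith) (by linarith)]
      nlinarith
    have hten : Tendsto (fun u => (H₂ u - H₂ y_K) / (u - y_K)) (𝓝[>] y_K) (𝓝 (d y_K)) := by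
      have := hasDerivWithinAt_iff_tendsto_slope.mp (hd y_K hyK').1
      rw [show Ioi y_K \ {y_K} = Ioi y_K from Set.diff_singleton_eq_self (by simp)] at this
      refine this.congr fun u => ?_
      rw [slope_def_field]
    have hle : d y_K ≤ (H₂ b - H₂ y_K) / (b - y_K) := by
      refine le_of_tendsto hten ?_
      filter_upwards [Ioo_mem_nhdsGT hb] with u hu
      exact hslope_mono u hu.1 hu.2
    have hb' : (0:ℝ) < b - y_K := by linarith
    have := (le_div_iff₀ hb').mp hle
    linarith
  -- c * b < H₂ b beyond y_K
  have hF15 : ∀ b : ℝ, y_K < b → c * b < H₂ b := by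
    intro b hb
    have ht := hH₂tangent b hb
    nlinarith [hdK, hcyK]
    -- W is below the identity
  have hWleid : ∀ y : ℝ, 0 < y → W y ≤ y := by
    intro y hy
    rcases le_or_gt y y_K with h2 | h2
    · rw [hWeq1 y h2]; nlinarith
    · rw [hWeq2 y h2, hH₂eq2 y (le_of_lt h2)]
      nlinarith [hwpos y hy]
  refine ⟨⟨hWcont, fun y hy => ⟨hWnonneg y hy, hH₁leW y hy, hWleH₂ y hy⟩, hWconcave⟩, ?_⟩
  intro h hcont hbnd hconc y₀ hy₀
  by_cases hcase : H₂ y₀ ≤ h y₀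
  · exact le_trans (hWleH₂ y₀ hy₀) hcase
  push_neg at hcase
  have hy₀0 : (0:ℝ) < y₀ := hy₀
  -- continuity of h at interior points
  have hcontAt : ∀ y : ℝ, 0 < y → ContinuousAt h y := fun y hy =>
    hcont.continuousAt (isOpen_Ioi.mem_nhds hy)
  -- key slope lemma for concave pieces reaching to +∞
  have slope_ge_one : ∀ a : ℝ, 0 ≤ a → ConcaveOn ℝ (Ioi a) h →
      ∀ x z : ℝ, a < x → x < z → h x + (z - x) ≤ h z := by
    intro a ha hcv x z hax hxz
    have hx0 : 0 < x := lt_of_le_of_lt ha hax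
    have hz0 : 0 < z := lt_trans hx0 hxz
    have hzx : (0:ℝ) < z - x := by linarith
    set s := (h z - h x) / (z - x) with hs
    have hu_le : ∀ u : ℝ, z < u → h u ≤ h x + s * (u - x) := by
      intro u hu
      have hcu := chord_concave hcv (mem_Ioi.mpr hax)
        (mem_Ioi.mpr (show a < u by linarith)) hxz hu
      have hlin : (z - x) * (h u - h x) ≤ (h z - h x) * (u - x) := by nlinarith
      have : h u - h x ≤ s * (u - x) := by
        rw [hs, div_mul_eq_mul_div, le_div_iff₀ hzx]
        linarith
      linarith
    have htendRHS : Tendsto (fun u => (h x + s * (u - x)) / u) atTop (𝓝 s) := by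
      have T : Tendsto (fun u : ℝ => (h x - s * x) * u⁻¹ + s) atTop
          (𝓝 ((h x - s * x) * 0 + s)) :=
        (tendsto_inv_atTop_zero.const_mul _).add tendsto_const_nhds
      rw [show (h x - s * x) * 0 + s = s by ring] at T
      refine Tendsto.congr' ?_ T
      filter_upwards [eventually_gt_atTop (0:ℝ)] with u hu
      field_simp
      ring
    have h1s : (1:ℝ) ≤ s := by
      refine le_of_tendsto_of_tendsto hlim htendRHS ?_
      filter_upwards [eventually_gt_atTop (max z 0)] with u hu
      have huz : z < u := lt_of_le_of_lt (le_max_left _ _) hu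
      have hu0 : (0:ℝ) < u := lt_of_le_of_lt (le_max_right _ _) hu
      have h1 : H₁ u ≤ h u := (hbnd u hu0).2.1
      exact (div_le_div_iff_of_pos_right hu0).mpr (le_trans h1 (hu_le u huz))
    have := (one_le_div hzx).mp h1s
    linarith
  -- the sets of contact points to the left and right
  by_cases hA : ∃ x : ℝ, 0 < x ∧ x ≤ y₀ ∧ H₂ x ≤ h x
  case neg =>
    -- no contact on the left of y₀
    have hAgap : ∀ x : ℝ, 0 < x → x ≤ y₀ → h x < H₂ x := by
      intro x h1 h2
      by_contra hc
      push_neg at hc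
      exact hA ⟨x, h1, h2, hc⟩
    by_cases hB : ∃ x : ℝ, y₀ ≤ x ∧ H₂ x ≤ h x
    case neg =>
      -- no contact anywhere : h < H₂ on Ioi 0
      have hgap : ∀ y ∈ Ioi (0:ℝ), h y < H₂ y := by
        intro y hy
        rcases le_or_gt y y₀ with h2 | h2
        · exact hAgap y hy h2
        · by_contra hc
          push_neg at hc
          exact hB ⟨y, le_of_lt h2, hc⟩
      have hcv : ConcaveOn ℝ (Ioi (0:ℝ)) h := hconc _ le_rfl.subset (convex_Ioi 0) hgap
      have hid : y₀ ≤ h y₀ := by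
        by_contra hc
        push_neg at hc
        set x := min ((y₀ - h y₀)/2) (y₀/2) with hxdef
        have hx1 : 0 < x := lt_min (by linarith) (by linarith)
        have hx2 : x < y₀ := lt_of_le_of_lt (min_le_right _ _) (by linarith)
        have := slope_ge_one 0 le_rfl hcv x y₀ hx1 hx2
        have hhx : 0 ≤ h x := (hbnd x hx1).1
        have : y₀ - x ≤ h y₀ := by linarith
        have hxle : x ≤ (y₀ - h y₀)/2 := min_le_left _ _
        linarith
      exact le_trans (hWleid y₀ hy₀0) hid
    case pos =>
      -- contact on the right but not on the left
      obtain ⟨xB, hxB⟩ := hB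
      set Bs : Set ℝ := {x : ℝ | y₀ ≤ x ∧ H₂ x ≤ h x} with hBsdef
      have hBne : Bs.Nonempty := ⟨xB, hxB⟩
      have hBbdd : BddBelow Bs := ⟨y₀, fun x hx => hx.1⟩
      have hBclosed : IsClosed Bs := by
        have : Bs = Ici y₀ ∩ (fun x => H₂ x - h x) ⁻¹' Iic 0 := by
          ext x; simp [hBsdef, sub_nonpos]
        rw [this]
        exact ContinuousOn.preimage_isClosed_of_isClosed
          ((hH₂cont.sub hcont).mono (fun t ht => lt_of_lt_of_le hy₀0 ht))
          isClosed_Ici isClosed_Iic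
      set b := sInf Bs with hbdef
      have hbmem : b ∈ Bs := hBclosed.csInf_mem hBne hBbdd
      have hbge : y₀ ≤ b := hbmem.1
      have hb0 : 0 < b := lt_of_lt_of_le hy₀0 hbge
      have hbh : h b = H₂ b := le_antisymm (hbnd b hb0).2.2 hbmem.2
      have hbne : y₀ ≠ b := by
        intro hc
        rw [← hc] at hbh
        linarith
      have hby₀ : y₀ < b := lt_of_le_of_ne hbge hbne
      have hBgap : ∀ x : ℝ, y₀ ≤ x → x < b → h x < H₂ x := by
        intro x h1 h2
        by_contra hc
        push_neg at hc
        exact notMem_of_lt_csInf h2 hBbdd ⟨h1, hc⟩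
      -- h < H₂ on (0, b)
      have hgap : ∀ y ∈ Ioo (0:ℝ) b, h y < H₂ y := by
        intro y hy
        rcases le_or_gt y y₀ with h2 | h2
        · exact hAgap y hy.1 h2
        · exact hBgap y (le_of_lt h2) hy.2
      have hcv : ConcaveOn ℝ (Ioo (0:ℝ) b) h :=
        hconc _ (fun t ht => ht.1) (convex_Ioo 0 b) hgap
      have hchord := concave_extend_chord_zero hb0 hcv
        (fun x hx => (hbnd x hx.1).1) (hcontAt b hb0).tendsto y₀ ⟨hy₀0, hby₀⟩
      rw [hbh] at hchord
      refine le_trans ?_ hchord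
      -- W y₀ ≤ (y₀ / b) * H₂ b
      have hcb : c * b ≤ H₂ b := by
        rcases le_or_gt b y_K with h2 | h2
        · exact hcleH₂ b hb0 h2
        · exact le_of_lt (hF15 b h2)
      rcases le_or_gt y₀ y_K with h2 | h2
      · rw [hWeq1 y₀ h2]
        rw [div_mul_eq_mul_div y₀ b (H₂ b), le_div_iff₀ hb0]
        nlinarith
      · rw [hWeq2 y₀ h2]
        have hc1 := chord_convex hH₂conv (self_mem_Ici)
          (mem_Ici.mpr (le_of_lt (lt_trans h2 hby₀))) h2 hby₀
        rw [div_mul_eq_mul_div y₀ b (H₂ b), le_div_iff₀ hb0]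
        have ht1 : b * ((b - y_K) * H₂ y₀) ≤ b * ((b - y₀) * H₂ y_K + (y₀ - y_K) * H₂ b) :=
          mul_le_mul_of_nonneg_left hc1 (le_of_lt hb0)
        have ht2 : (b - y₀) * (H₂ y_K * b) ≤ (b - y₀) * (y_K * H₂ b) := by
          have : H₂ y_K * b ≤ y_K * H₂ b := by nlinarith [hcyK]
          exact mul_le_mul_of_nonneg_left this (by linarith)
        nlinarith [ht1, ht2]
  case pos =>
    -- contact on the left of y₀
    obtain ⟨xA, hxA⟩ := hA
    set As : Set ℝ := {x : ℝ | xA ≤ x ∧ x ≤ y₀ ∧ H₂ x ≤ h x} with hAsdef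
    have hAne : As.Nonempty := ⟨xA, le_rfl, hxA.2.1, hxA.2.2⟩
    have hAbdd : BddAbove As := ⟨y₀, fun x hx => hx.2.1⟩
    have hAclosed : IsClosed As := by
      have : As = Icc xA y₀ ∩ (fun x => H₂ x - h x) ⁻¹' Iic 0 := by
        ext x; simp only [hAsdef, mem_inter_iff, mem_Icc, mem_preimage, mem_Iic, mem_setOf_eq,
          sub_nonpos]
        tauto
      rw [this]
      exact ContinuousOn.preimage_isClosed_of_isClosed
        ((hH₂cont.sub hcont).mono (fun t ht => lt_of_lt_of_le hxA.1 ht.1))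
        isClosed_Icc isClosed_Iic
    set a := sSup As with hadef
    have hamem : a ∈ As := hAclosed.csSup_mem hAne hAbdd
    have ha0 : 0 < a := lt_of_lt_of_le hxA.1 hamem.1
    have hah : h a = H₂ a := le_antisymm (hbnd a ha0).2.2 hamem.2.2
    have hane : a ≠ y₀ := by
      intro hc
      rw [hc] at hah
      linarith
    have hay₀ : a < y₀ := lt_of_le_of_ne hamem.2.1 hane
    have hAgap : ∀ x : ℝ, a < x → x ≤ y₀ → h x < H₂ x := by
      intro x h1 h2
      by_contra hc
      push_neg at hc
      have hxmem : x ∈ As := ⟨le_trans hamem.1 (le_of_lt h1), h2, hc⟩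
      exact absurd (le_csSup hAbdd hxmem) (not_le.mpr h1)
    by_cases hB : ∃ x : ℝ, y₀ ≤ x ∧ H₂ x ≤ h x
    case neg =>
      -- contact on the left, none on the right: contradiction via slope ≥ 1
      have hgap : ∀ y ∈ Ioi a, h y < H₂ y := by
        intro y hy
        rcases le_or_gt y y₀ with h2 | h2
        · exact hAgap y hy h2
        · by_contra hc
          push_neg at hc
          exact hB ⟨y, le_of_lt h2, hc⟩
      have hcv : ConcaveOn ℝ (Ioi a) h :=
        hconc _ (fun t ht => lt_trans ha0 ht) (convex_Ioi a) hgap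
      have hkey : h a + (y₀ - a) ≤ h y₀ := by
        have hten : Tendsto (fun x => h x + (y₀ - x)) (𝓝[>] a) (𝓝 (h a + (y₀ - a))) :=
          ((hcontAt a ha0).tendsto.add
            (tendsto_const_nhds.sub tendsto_id)).mono_left nhdsWithin_le_nhds
        refine le_of_tendsto hten ?_
        filter_upwards [Ioo_mem_nhdsGT hay₀] with x hx
        exact slope_ge_one a (le_of_lt ha0) hcv x y₀ hx.1 hx.2
      have hstrict := hH₂slope a y₀ ha0 hay₀
      have := (hbnd y₀ hy₀0).2.2
      rw [hah] at hkey
      linarith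
    case pos =>
      -- contact on both sides
      obtain ⟨xB, hxB⟩ := hB
      set Bs : Set ℝ := {x : ℝ | y₀ ≤ x ∧ H₂ x ≤ h x} with hBsdef
      have hBne : Bs.Nonempty := ⟨xB, hxB⟩
      have hBbdd : BddBelow Bs := ⟨y₀, fun x hx => hx.1⟩
      have hBclosed : IsClosed Bs := by
        have : Bs = Ici y₀ ∩ (fun x => H₂ x - h x) ⁻¹' Iic 0 := by
          ext x; simp [hBsdef, sub_nonpos]
        rw [this]
        exact ContinuousOn.preimage_isClosed_of_isClosed
          ((hH₂cont.sub hcont).mono (fun t ht => lt_of_lt_of_le hy₀0 ht))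
          isClosed_Ici isClosed_Iic
      set b := sInf Bs with hbdef
      have hbmem : b ∈ Bs := hBclosed.csInf_mem hBne hBbdd
      have hbge : y₀ ≤ b := hbmem.1
      have hb0 : 0 < b := lt_of_lt_of_le hy₀0 hbge
      have hbh : h b = H₂ b := le_antisymm (hbnd b hb0).2.2 hbmem.2
      have hbne : y₀ ≠ b := by
        intro hc
        rw [← hc] at hbh
        linarith
      have hby₀ : y₀ < b := lt_of_le_of_ne hbge hbne
      have hBgap : ∀ x : ℝ, y₀ ≤ x → x < b → h x < H₂ x := by
        intro x h1 h2
        by_contra hc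
        push_neg at hc
        exact notMem_of_lt_csInf h2 hBbdd ⟨h1, hc⟩
      have hgap : ∀ y ∈ Ioo a b, h y < H₂ y := by
        intro y hy
        rcases le_or_gt y y₀ with h2 | h2
        · exact hAgap y hy.1 h2
        · exact hBgap y (le_of_lt h2) hy.2
      have hcv : ConcaveOn ℝ (Ioo a b) h :=
        hconc _ (fun t ht => lt_trans ha0 ht.1) (convex_Ioo a b) hgap
      have hchord := concave_extend_chord hcv (hcontAt a ha0).tendsto
        (hcontAt b hb0).tendsto y₀ ⟨hay₀, hby₀⟩
      rw [hah, hbh] at hchord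
      refine le_trans ?_ hchord
      have hba : (0:ℝ) < b - a := by linarith
      rw [le_div_iff₀ hba]
      -- W y₀ * (b - a) ≤ (b - y₀) * H₂ a + (y₀ - a) * H₂ b
      rcases le_or_gt b y_K with hbK | hbK
      · -- line case
        have hya : y₀ ≤ y_K := le_trans (le_of_lt hby₀) hbK
        rw [hWeq1 y₀ hya]
        have t1 : (b - y₀) * (c * a) ≤ (b - y₀) * H₂ a :=
          mul_le_mul_of_nonneg_left (hcleH₂ a ha0 (le_trans (le_of_lt hay₀) hya)) (by linarith)
        have t2 : (y₀ - a) * (c * b) ≤ (y₀ - a) * H₂ b :=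
          mul_le_mul_of_nonneg_left (hcleH₂ b hb0 hbK) (by linarith)
        nlinarith [t1, t2]
      · rcases le_or_gt y_K a with haK | haK
        · -- convex case : a ≥ y_K
          have hyaK : y_K < y₀ := lt_of_le_of_lt haK hay₀
          rw [hWeq2 y₀ hyaK]
          have := chord_convex hH₂conv (mem_Ici.mpr haK)
            (mem_Ici.mpr (le_of_lt hbK)) hay₀ hby₀
          linarith
        · -- mixed case : a < y_K < b
          have hcb : c * b ≤ H₂ b := le_of_lt (hF15 b hbK)
          have hca : c * a ≤ H₂ a := hcleH₂ a ha0 (le_of_lt haK)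
          have hkey : H₂ y_K * (b - a) ≤ (b - y_K) * H₂ a + (y_K - a) * H₂ b := by
            have t1 : (b - y_K) * (c * a) ≤ (b - y_K) * H₂ a :=
              mul_le_mul_of_nonneg_left hca (by linarith)
            have t2 : (y_K - a) * (c * b) ≤ (y_K - a) * H₂ b :=
              mul_le_mul_of_nonneg_left hcb (by linarith)
            nlinarith [t1, t2, hcyK]
          rcases le_or_gt y₀ y_K with hyle | hygt
          · rw [hWeq1 y₀ hyle]
            have hKa : (0:ℝ) < y_K - a := by linarith
            have t1 : 0 ≤ (y_K - y₀) * ((b - a) * (H₂ a - c * a)) :=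
              mul_nonneg (by linarith) (mul_nonneg (by linarith) (by linarith))
            have t2 : 0 ≤ (y₀ - a) * ((b - y_K) * H₂ a + (y_K - a) * H₂ b - c * y_K * (b - a)) := by
              refine mul_nonneg (by linarith) ?_
              rw [hcyK]
              linarith
            nlinarith [t1, t2]
          · rw [hWeq2 y₀ hygt]
            have hchordK := chord_convex hH₂conv (self_mem_Ici)
              (mem_Ici.mpr (le_of_lt hbK)) hygt hby₀
            -- (b - y_K) * H₂ y₀ ≤ (b - y₀) * H₂ y_K + (y₀ - y_K) * H₂ b
            have t1 : 0 ≤ (b - y₀) * ((b - y_K) * H₂ a + (y_K - a) * H₂ b - H₂ y_K * (b - a)) :=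
              mul_nonneg (by linarith) (by linarith)
            have t2 : 0 ≤ (b - a) * ((b - y₀) * H₂ y_K + (y₀ - y_K) * H₂ b - (b - y_K) * H₂ y₀) :=
              mul_nonneg (by linarith) (by linarith)
            nlinarith [t1, t2]
end

section
/- For the geometric Brownian motion game option with g₁(x) = (x−K)⁺, g₂(x) = C(x−K)⁺ and C ≥ 1 + 2β/σ², the function V(x) = (x − K^{(2β+σ²)/σ²} x^{−2β/σ²})⁺ satisfies g₁(x) ≤ V(x) ≤ g₂(x) for all x > 0. -/
open Set

/-- Case `C ≥ 1 + 2β/σ²` of the geometric Brownian motion game option: the value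
`V(x) = (x − K^((2β+σ²)/σ²) x^(−2β/σ²))⁺` is sandwiched between the contract
functions `g₁(x) = (x−K)⁺` and `g₂(x) = C(x−K)⁺`. -/
theorem gbm_game_sandwich (β σ K C : ℝ) (hβ : 0 < β) (hσ : 0 < σ) (hK : 0 < K)
    (hC : 1 + 2 * β / σ ^ 2 ≤ C) :
    ∀ x ∈ Ioi (0:ℝ),
      max (x - K) 0 ≤ max (x - K ^ ((2 * β + σ ^ 2) / σ ^ 2) * x ^ (-(2 * β) / σ ^ 2)) 0 ∧
      max (x - K ^ ((2 * β + σ ^ 2) / σ ^ 2) * x ^ (-(2 * β) / σ ^ 2)) 0 ≤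
        C * max (x - K) 0 := by
  intro x hx
  simp only [mem_Ioi] at hx
  have hσ2 : (0:ℝ) < σ ^ 2 := by positivity
  set a := 2 * β / σ ^ 2 with ha_def
  have ha : 0 < a := by positivity
  have hC0 : (0:ℝ) ≤ C := le_trans (by positivity) hC
  have hxa : (0:ℝ) < x ^ a := Real.rpow_pos_of_pos hx a
  have hE : K ^ ((2 * β + σ ^ 2) / σ ^ 2) * x ^ (-(2 * β) / σ ^ 2)
      = x * (K / x) ^ (1 + a) := by
    rw [show (2 * β + σ ^ 2) / σ ^ 2 = 1 + a by rw [ha_def]; field_simp; ring,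
        show -(2 * β) / σ ^ 2 = -a by rw [neg_div],
        Real.div_rpow hK.le hx.le, Real.rpow_neg hx.le,
        Real.rpow_add hx, Real.rpow_one, Real.rpow_add hK, Real.rpow_one]
    field_simp
  rw [hE]
  have hKx : 0 < K / x := by positivity
  rcases le_total x K with hxK | hxK
  · -- x ≤ K
    have h1 : 1 ≤ K / x := (one_le_div hx).2 hxK
    have h2 : (1:ℝ) ≤ (K / x) ^ (1 + a) :=
      Real.one_le_rpow h1 (by linarith)
    have h3 : x ≤ x * (K / x) ^ (1 + a) := le_mul_of_one_le_right hx.le h2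
    constructor
    · have : x - K ≤ 0 := by linarith
      calc max (x - K) 0 = 0 := max_eq_right this
        _ ≤ _ := le_max_right _ _
    · have : x - x * (K / x) ^ (1 + a) ≤ 0 := by linarith
      rw [max_eq_right this]
      positivity
  · -- K ≤ x
    have ht1 : K / x ≤ 1 := (div_le_one hx).2 hxK
    have h2 : (K / x) ^ (1 + a) ≤ 1 :=
      Real.rpow_le_one hKx.le ht1 (by linarith)
    -- Bernoulli
    have hbern : 1 + (1 + a) * (K / x - 1) ≤ (K / x) ^ (1 + a) := by
      have := one_add_mul_self_le_rpow_one_add (s := K / x - 1)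
        (by linarith) (p := 1 + a) (by linarith)
      simpa using this
    have hkey : x - x * (K / x) ^ (1 + a) ≤ C * (x - K) := by
      have hmul : x * (1 + (1 + a) * (K / x - 1)) ≤ x * (K / x) ^ (1 + a) :=
        mul_le_mul_of_nonneg_left hbern hx.le
      have hxKdiv : x * (K / x) = K := by field_simp
      have h4 : x - x * (K / x) ^ (1 + a) ≤ (1 + a) * (x - K) := by nlinarith
      have h5 : (1 + a) * (x - K) ≤ C * (x - K) := by nlinarith
      linarith
    constructor
    · apply max_le_max _ le_rfl
      have h6 : (K / x) ^ (1 + a) ≤ (K / x) ^ (1:ℝ) :=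
        Real.rpow_le_rpow_of_exponent_ge hKx ht1 (by linarith)
      rw [Real.rpow_one] at h6
      have h7 : x * (K / x) ^ (1 + a) ≤ x * (K / x) :=
        mul_le_mul_of_nonneg_left h6 hx.le
      have hxKdiv : x * (K / x) = K := by field_simp
      linarith
    · rw [max_eq_left (by linarith : (0:ℝ) ≤ x - K)]
      exact max_le hkey (by nlinarith)
end

section
/- Let α := 2β/σ² > 0 and 1 < C < 1 + α, K > 0, and let x' = 2βCK/((2β+σ²)(C−1)). Then x' > K, and the function V defined by V(x) = C(x−K)⁺ for x < x' and V(x) = x − (CKσ²/(2β+σ²))·(x'/x)^{2β/σ²} for x ≥ x' is continuous at x', differentiable at x' with matching derivative C, and satisfies (x−K)⁺ ≤ V(x) ≤ C(x−K)⁺ for all x > 0. -/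
open Set Filter Topology

lemma gbm_amgm (a u : ℝ) (ha : 0 < a) (hu : 0 < u) : a + 1 ≤ a / u + u ^ a := by
  have h1 : (0:ℝ) < a + 1 := by linarith
  have key := Real.geom_mean_le_arith_mean2_weighted
    (w₁ := a / (a + 1)) (w₂ := 1 / (a + 1)) (p₁ := 1 / u) (p₂ := u ^ a)
    (by positivity) (by positivity) (by positivity) (Real.rpow_nonneg hu.le a)
    (by field_simp)
  have hL : (1 / u) ^ (a / (a + 1)) * (u ^ a) ^ (1 / (a + 1)) = 1 := by
    rw [one_div u, ← Real.rpow_neg_one u,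
      ← Real.rpow_mul hu.le, ← Real.rpow_mul hu.le, ← Real.rpow_add hu,
      show -1 * (a / (a + 1)) + a * (1 / (a + 1)) = 0 by field_simp; ring, Real.rpow_zero]
  rw [hL] at key
  have h2 : a / (a + 1) * (1 / u) + 1 / (a + 1) * u ^ a = (a / u + u ^ a) / (a + 1) := by
    field_simp
  rw [h2, le_div_iff₀ h1] at key
  linarith

/-- Case `1 < C < 1 + 2β/σ²`: with `x' = 2βCK/((2β+σ²)(C−1))`, the value function
`V(x) = C(x−K)⁺` for `x < x'` and `V(x) = x − (CKσ²/(2β+σ²))(x'/x)^(2β/σ²)` for `x ≥ x'`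
satisfies: `x' > K`, `V` is continuous at `x'` from the left, the left and right
derivatives of `V` at `x'` both equal `C`, and `(x−K)⁺ ≤ V(x) ≤ C(x−K)⁺` on `(0,∞)`. -/
theorem gbm_game_case2 (β σ K C : ℝ) (hβ : 0 < β) (hσ : 0 < σ) (hK : 0 < K)
    (hC₁ : 1 < C) (hC₂ : C < 1 + 2 * β / σ ^ 2)
    (x' : ℝ) (hx' : x' = 2 * β * C * K / ((2 * β + σ ^ 2) * (C - 1)))
    (V : ℝ → ℝ)
    (hV : V = fun x => if x < x' then C * max (x - K) 0
      else x - C * K * σ ^ 2 / (2 * β + σ ^ 2) * (x' / x) ^ (2 * β / σ ^ 2)) :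
    K < x' ∧
      Tendsto V (𝓝[<] x') (𝓝 (V x')) ∧
      HasDerivWithinAt V C (Iio x') x' ∧ HasDerivWithinAt V C (Ioi x') x' ∧
      ∀ x ∈ Ioi (0:ℝ), max (x - K) 0 ≤ V x ∧ V x ≤ C * max (x - K) 0 := by
  have hσ2 : (0:ℝ) < σ ^ 2 := by positivity
  have hden : (0:ℝ) < 2 * β + σ ^ 2 := by positivity
  have hC1 : (0:ℝ) < C - 1 := by linarith
  have hCσ : C * σ ^ 2 < 2 * β + σ ^ 2 := by
    have := (lt_div_iff₀ hσ2).mp (by linarith [hC₂] : C - 1 < 2 * β / σ ^ 2)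
    nlinarith
  set a : ℝ := 2 * β / σ ^ 2 with ha_def
  have ha : 0 < a := by positivity
  set A : ℝ := C * K * σ ^ 2 / (2 * β + σ ^ 2) with hA_def
  have hA : 0 < A := by positivity
  have hAK : A < K := by
    rw [hA_def, div_lt_iff₀ hden]; nlinarith
  have hkey : (C - 1) * x' = a * A := by
    rw [hx', ha_def, hA_def]; field_simp
  have hCK : C * K = (a + 1) * A := by
    rw [ha_def, hA_def]; field_simp
  have hKx : K < x' := by
    rw [hx', lt_div_iff₀ (by positivity)]; nlinarith
  have hx0 : (0:ℝ) < x' := lt_trans hK hKx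
  -- value at x'
  have hVx' : V x' = C * (x' - K) := by
    rw [hV]; simp only [lt_irrefl, if_false, div_self (ne_of_gt hx0), Real.one_rpow]
    nlinarith [hkey, hCK]
  -- left derivative
  have hleft : HasDerivWithinAt V C (Iio x') x' := by
    have hlin : HasDerivWithinAt (fun x : ℝ => C * (x - K)) C (Iio x') x' := by
      simpa using (((hasDerivAt_id x').sub_const K).const_mul C).hasDerivWithinAt
    refine hlin.congr_of_eventuallyEq ?_ hVx'
    have h1 : ∀ᶠ y in 𝓝[Iio x'] x', K < y :=
      eventually_nhdsWithin_of_eventually_nhds (eventually_gt_nhds hKx)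
    filter_upwards [h1, self_mem_nhdsWithin] with y hy1 hy2
    rw [hV]
    simp only [if_pos (mem_Iio.mp hy2), max_eq_left (by linarith : (0:ℝ) ≤ y - K)]
  -- right derivative
  have hright : HasDerivWithinAt V C (Ioi x') x' := by
    have hg : HasDerivAt (fun x : ℝ => x' / x) (x' * (-(x' ^ 2)⁻¹)) x' := by
      simpa [div_eq_mul_inv] using (hasDerivAt_inv (ne_of_gt hx0)).const_mul x'
    have hgx : x' / x' = 1 := div_self (ne_of_gt hx0)
    have hrpow := hg.rpow_const (p := a) (Or.inl (by rw [hgx]; norm_num))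
    have hf : HasDerivAt (fun x : ℝ => x - A * (x' / x) ^ a)
        (1 - A * (x' * (-(x' ^ 2)⁻¹) * a * (x' / x') ^ (a - 1))) x' :=
      (hasDerivAt_id x').sub (hrpow.const_mul A)
    have hval : 1 - A * (x' * (-(x' ^ 2)⁻¹) * a * (x' / x') ^ (a - 1)) = C := by
      rw [hgx, Real.one_rpow]
      have hx2 : x' ^ 2 ≠ 0 := by positivity
      field_simp
      nlinarith [hkey]
    rw [hval] at hf
    refine hf.hasDerivWithinAt.congr (fun y hy => ?_) ?_
    · rw [hV]; simp only [if_neg (not_lt.mpr (le_of_lt (mem_Ioi.mp hy)))]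
    · rw [hV]; simp only [if_neg (lt_irrefl x')]
  refine ⟨hKx, hleft.continuousWithinAt, hleft, hright, ?_⟩
  -- sandwich
  intro x hx
  rcases lt_or_ge x x' with hxx | hxx
  · have hVxeq : V x = C * max (x - K) 0 := by rw [hV]; simp [hxx]
    constructor
    · rw [hVxeq]
      nlinarith [le_max_right (x - K) 0, le_max_left (x - K) 0,
        (le_max_right (x - K) 0 : (0:ℝ) ≤ max (x - K) 0)]
    · rw [hVxeq]
  · have hx0' : (0:ℝ) < x := hx
    have hKxx : K < x := lt_of_lt_of_le hKx hxx
    have hmax : max (x - K) 0 = x - K := max_eq_left (by linarith)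
    have hVxeq : V x = x - A * (x' / x) ^ a := by
      rw [hV]; simp only [if_neg (not_lt.mpr hxx)]
    set r : ℝ := x' / x with hr_def
    have hr0 : 0 < r := by positivity
    have hr1 : r ≤ 1 := by
      rw [hr_def, div_le_one hx0']; exact hxx
    constructor
    · -- lower bound
      rw [hVxeq, hmax]
      have h1 : r ^ a ≤ 1 := Real.rpow_le_one hr0.le hr1 ha.le
      nlinarith [hA, hAK, mul_le_mul_of_nonneg_left h1 hA.le]
    · -- upper bound
      rw [hVxeq, hmax]
      -- need: x - A r^a ≤ C (x - K), i.e. C*K ≤ (C-1)*x + A r^a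
      have hamgm := gbm_amgm a r ha hr0
      -- (a+1) A ≤ (a A)/r + A r^a ; and (C-1) x = aA/r since x = x'/r
      have hxr : x = x' / r := by
        rw [hr_def]; field_simp
      have hxr' : x * r = x' := by rw [hr_def]; field_simp
      have h2 : (C - 1) * x = a * A / r := by
        rw [eq_div_iff hr0.ne', ← hkey, ← hxr']; ring
      have h3 : (a + 1) * A ≤ a * A / r + A * r ^ a := by
        have := mul_le_mul_of_nonneg_left hamgm hA.le
        calc (a + 1) * A = A * (a + 1) := by ring
          _ ≤ A * (a / r + r ^ a) := this
          _ = a * A / r + A * r ^ a := by ring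
      rw [← hCK] at h3
      rw [← h2] at h3
      linarith [h3]
end

section
/- Non-preservation of convexity: with β, σ, K > 0, 1 < C < 1 + 2β/σ², and x' = 2βCK/((2β+σ²)(C−1)), the function V(x) = C(x−K)⁺ for x < x' and V(x) = x − (CKσ²/(2β+σ²))(x'/x)^{2β/σ²} for x ≥ x' is not convex on (0,∞), even though both x ↦ (x−K)⁺ and x ↦ C(x−K)⁺ are convex. -/
/-!
Below `x'` the value is `C (x - K)`, and `V` is continuous at `x'`, so the secant of `V` from `K`
to `x'` has slope `C > 1`. A convex function then grows at least with slope `C` beyond `x'`,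
whereas `V x ≤ x` there.
-/

open Set

lemma convexOn_const_mul_max_sub_zero (K c : ℝ) (hc : 0 ≤ c) :
    ConvexOn ℝ univ (fun x => c * max (x - K) 0) :=
  (((convexOn_id convex_univ).sub (concaveOn_const K convex_univ)).sup
    (convexOn_const 0 convex_univ)).smul hc

lemma ConvexOn.exists_lt_self_of_one_lt_slope {s : Set ℝ} {f : ℝ → ℝ} {a b : ℝ}
    (hf : ConvexOn ℝ s f) (ha : a ∈ s) (hab : a < b) (hs : Ici b ⊆ s)
    (hslope : 1 < slope f a b) : ∃ x ≥ b, x < f x := by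
  set c := slope f a b
  refine ⟨max b ((c * a - f a + 1) / (c - 1)), le_max_left _ _, ?_⟩
  set x := max b ((c * a - f a + 1) / (c - 1))
  have hbx : b ≤ x := le_max_left _ _
  have hax : 0 < x - a := by linarith
  have hlarge : c * a - f a + 1 ≤ (c - 1) * x :=
    (div_le_iff₀' (by linarith)).1 (le_max_right _ _)
  have hmono : c ≤ slope f a x :=
    hf.slope_mono ha ⟨hs self_mem_Ici, hab.ne'⟩ ⟨hs hbx, (by linarith : a < x).ne'⟩ hbx
  rw [slope_def_field, le_div_iff₀ hax] at hmono
  nlinarith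

variable {β σ K C : ℝ}

lemma strike_lt_exercise_boundary (hβ : 0 < β) (hσ : 0 < σ) (hK : 0 < K) (hC₁ : 1 < C)
    (hC₂ : C < 1 + 2 * β / σ ^ 2) :
    K < 2 * β * C * K / ((2 * β + σ ^ 2) * (C - 1)) := by
  have hσ2 : 0 < σ ^ 2 := by positivity
  have h : (C - 1) * σ ^ 2 < 2 * β := by
    rwa [← sub_lt_iff_lt_add', lt_div_iff₀ hσ2] at hC₂
  rw [lt_div_iff₀ (by nlinarith)]
  nlinarith

lemma exercise_boundary_sub (hden : 2 * β + σ ^ 2 ≠ 0) (hC : C ≠ 1) :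
    2 * β * C * K / ((2 * β + σ ^ 2) * (C - 1)) - C * K * σ ^ 2 / (2 * β + σ ^ 2) =
      C * (2 * β * C * K / ((2 * β + σ ^ 2) * (C - 1)) - K) := by
  have : C - 1 ≠ 0 := sub_ne_zero.2 hC
  field_simp
  ring

/-- Non-preservation of convexity: although both contract functions `(x−K)⁺` and
`C(x−K)⁺` are convex, the value function of the game option in the case
`1 < C < 1 + 2β/σ²` is not convex on `(0, ∞)`. -/
theorem game_value_not_convex (β σ K C : ℝ) (hβ : 0 < β) (hσ : 0 < σ) (hK : 0 < K)
    (hC₁ : 1 < C) (hC₂ : C < 1 + 2 * β / σ ^ 2)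
    (x' : ℝ) (hx' : x' = 2 * β * C * K / ((2 * β + σ ^ 2) * (C - 1)))
    (V : ℝ → ℝ)
    (hV : V = fun x => if x < x' then C * max (x - K) 0
      else x - C * K * σ ^ 2 / (2 * β + σ ^ 2) * (x' / x) ^ (2 * β / σ ^ 2)) :
    ConvexOn ℝ (Ioi 0) (fun x => max (x - K) 0) ∧
      ConvexOn ℝ (Ioi 0) (fun x => C * max (x - K) 0) ∧
      ¬ ConvexOn ℝ (Ioi 0) V := by
  have hinterval (c : ℝ) (hc : 0 ≤ c) : ConvexOn ℝ (Ioi 0) (fun x => c * max (x - K) 0) :=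
    (convexOn_const_mul_max_sub_zero K c hc).subset (subset_univ _) (convex_Ioi 0)
  refine ⟨by simpa using hinterval 1 zero_le_one, hinterval C (by linarith), fun hconv => ?_⟩
  have hKx' : K < x' := hx' ▸ strike_lt_exercise_boundary hβ hσ hK hC₁ hC₂
  have hVK : V K = 0 := by simp [hV, hKx']
  have hVx' : V x' = C * (x' - K) := by
    simp only [hV, lt_irrefl, if_false, div_self (hK.trans hKx').ne', Real.one_rpow, mul_one]
    exact hx' ▸ exercise_boundary_sub (by positivity) hC₁.ne'
  have hslope : slope V K x' = C := by
    rw [slope_def_field, hVK, hVx', sub_zero, mul_div_cancel_right₀ _ (sub_pos.2 hKx').ne']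
  obtain ⟨x, hx'x, hVx⟩ := hconv.exists_lt_self_of_one_lt_slope hK hKx'
    (Ici_subset_Ioi.2 (hK.trans hKx')) (hslope ▸ hC₁)
  have hV_le : V x ≤ x := by
    have hx : 0 < x := by linarith
    simp only [hV, not_lt.2 hx'x, if_false, sub_le_self_iff]
    exact mul_nonneg (by positivity)
      (Real.rpow_nonneg (div_nonneg (hK.trans hKx').le hx.le) _)
  exact hVx.not_ge hV_le
end
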